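/- arXiv:math/0605418 — 12 statements merged into one kernel-verified Lean document; each statement's English description precedes it below -/
import Mathlib

section
/- Let (X,d) be an arbitrary metric space. Then the square-root metric satisfies the Ptolemy inequality: for all points y₁, y₂, y₃, y₄ ∈ X one has √(d(y₁,y₃))·√(d(y₂,y₄)) ≤ √(d(y₁,y₂))·√(d(y₃,y₄)) + √(d(y₂,y₃))·√(d(y₄,y₁)). -/
/-- Key algebraic lemma: if `α ≤ γ`, `β ≤ η` (in squares) and `β²+γ² ≤ α²+η²`, then
`(α²+β²)(β²+γ²) ≤ (αγ+βη)²`. -/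
lemma ptolemy_key (α β γ η : ℝ) (hα : 0 ≤ α) (hβ : 0 ≤ β) (hγ : 0 ≤ γ) (hη : 0 ≤ η)
    (h1 : α ^ 2 ≤ γ ^ 2) (h2 : β ^ 2 ≤ η ^ 2) (h3 : β ^ 2 + γ ^ 2 ≤ α ^ 2 + η ^ 2) :
    (α ^ 2 + β ^ 2) * (β ^ 2 + γ ^ 2) ≤ (α * γ + β * η) ^ 2 := by
  have hag : α ≤ γ := by nlinarith
  have hbe : β ≤ η := by nlinarith
  have key1 : α ^ 2 + β ^ 2 + γ ^ 2 - η ^ 2 ≤ 2 * α * γ := by nlinarith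
  have key2 : β * (α ^ 2 + β ^ 2 + γ ^ 2 - η ^ 2) ≤ 2 * α * γ * η := by
    rcases le_total (α ^ 2 + β ^ 2 + γ ^ 2) (η ^ 2) with h | h
    · have h0 : β * (α ^ 2 + β ^ 2 + γ ^ 2 - η ^ 2) ≤ 0 :=
        mul_nonpos_of_nonneg_of_nonpos hβ (by linarith)
      have h1' : 0 ≤ 2 * α * γ * η := by positivity
      linarith
    · calc β * (α ^ 2 + β ^ 2 + γ ^ 2 - η ^ 2)
          ≤ η * (α ^ 2 + β ^ 2 + γ ^ 2 - η ^ 2) := by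
            apply mul_le_mul_of_nonneg_right hbe (by linarith)
        _ ≤ η * (2 * α * γ) := by
            apply mul_le_mul_of_nonneg_left key1 hη
        _ = 2 * α * γ * η := by ring
  nlinarith [mul_nonneg hβ (sub_nonneg.2 key2)]

/-- If `P² ≤ α²+β²`, `P² ≤ γ²+η²`, `Q² ≤ β²+γ²`, `Q² ≤ α²+η²`, then `PQ ≤ αγ+βη`. -/
lemma ptolemy_min4 (α β γ η P Q : ℝ) (hα : 0 ≤ α) (hβ : 0 ≤ β) (hγ : 0 ≤ γ) (hη : 0 ≤ η)
    (hP : 0 ≤ P) (hQ : 0 ≤ Q)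
    (hP1 : P ^ 2 ≤ α ^ 2 + β ^ 2) (hP2 : P ^ 2 ≤ γ ^ 2 + η ^ 2)
    (hQ1 : Q ^ 2 ≤ β ^ 2 + γ ^ 2) (hQ2 : Q ^ 2 ≤ α ^ 2 + η ^ 2) :
    P * Q ≤ α * γ + β * η := by
  have hR : 0 ≤ α * γ + β * η := by positivity
  have hsq : (P * Q) ^ 2 ≤ (α * γ + β * η) ^ 2 := by
    have hQsq : 0 ≤ Q ^ 2 := sq_nonneg Q
    rcases le_total (α ^ 2 + β ^ 2) (γ ^ 2 + η ^ 2) with hAB | hAB <;>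
      rcases le_total (β ^ 2 + γ ^ 2) (α ^ 2 + η ^ 2) with hCD | hCD
    · -- A ≤ B, C ≤ D
      rcases le_total (α ^ 2 + β ^ 2) (β ^ 2 + γ ^ 2) with h | h
      · -- A ≤ C : use key with (α β γ η): A*C ≤ R²
        have := ptolemy_key α β γ η hα hβ hγ hη (by linarith) (by linarith) hCD
        calc (P * Q) ^ 2 = P ^ 2 * Q ^ 2 := by ring
          _ ≤ (α ^ 2 + β ^ 2) * (β ^ 2 + γ ^ 2) :=
              mul_le_mul hP1 hQ1 hQsq (by positivity)
          _ ≤ (α * γ + β * η) ^ 2 := this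
      · -- C ≤ A : use key with (γ β α η): C*A ≤ (γα+βη)²
        have := ptolemy_key γ β α η hγ hβ hα hη (by linarith) (by linarith) (by linarith)
        calc (P * Q) ^ 2 = Q ^ 2 * P ^ 2 := by ring
          _ ≤ (γ ^ 2 + β ^ 2) * (β ^ 2 + α ^ 2) :=
              mul_le_mul (by linarith) (by linarith) (sq_nonneg P) (by positivity)
          _ ≤ (γ * α + β * η) ^ 2 := this
          _ = (α * γ + β * η) ^ 2 := by ring
    · -- A ≤ B, D ≤ C
      rcases le_total (α ^ 2 + β ^ 2) (α ^ 2 + η ^ 2) with h | h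
      · -- A ≤ D : key with (β α η γ): A*D ≤ (βη+αγ)²
        have := ptolemy_key β α η γ hβ hα hη hγ (by linarith) (by linarith) (by linarith)
        calc (P * Q) ^ 2 = P ^ 2 * Q ^ 2 := by ring
          _ ≤ (β ^ 2 + α ^ 2) * (α ^ 2 + η ^ 2) :=
              mul_le_mul (by linarith) hQ2 hQsq (by positivity)
          _ ≤ (β * η + α * γ) ^ 2 := this
          _ = (α * γ + β * η) ^ 2 := by ring
      · -- D ≤ A : key with (η α β γ): D*A ≤ (ηβ+αγ)²
        have := ptolemy_key η α β γ hη hα hβ hγ (by linarith) (by linarith) (by linarith)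
        calc (P * Q) ^ 2 = Q ^ 2 * P ^ 2 := by ring
          _ ≤ (η ^ 2 + α ^ 2) * (α ^ 2 + β ^ 2) :=
              mul_le_mul (by linarith) hP1 (sq_nonneg P) (by positivity)
          _ ≤ (η * β + α * γ) ^ 2 := this
          _ = (α * γ + β * η) ^ 2 := by ring
    · -- B ≤ A, C ≤ D
      rcases le_total (γ ^ 2 + η ^ 2) (β ^ 2 + γ ^ 2) with h | h
      · -- B ≤ C : key with (η γ β α): B*C ≤ (ηβ+γα)²
        have := ptolemy_key η γ β α hη hγ hβ hα (by linarith) (by linarith) (by linarith)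
        calc (P * Q) ^ 2 = P ^ 2 * Q ^ 2 := by ring
          _ ≤ (η ^ 2 + γ ^ 2) * (γ ^ 2 + β ^ 2) :=
              mul_le_mul (by linarith) (by linarith) hQsq (by positivity)
          _ ≤ (η * β + γ * α) ^ 2 := this
          _ = (α * γ + β * η) ^ 2 := by ring
      · -- C ≤ B : key with (β γ η α): C*B ≤ (βη+γα)²
        have := ptolemy_key β γ η α hβ hγ hη hα (by linarith) (by linarith) (by linarith)
        calc (P * Q) ^ 2 = Q ^ 2 * P ^ 2 := by ring
          _ ≤ (β ^ 2 + γ ^ 2) * (γ ^ 2 + η ^ 2) :=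
              mul_le_mul hQ1 hP2 (sq_nonneg P) (by positivity)
          _ ≤ (β * η + γ * α) ^ 2 := this
          _ = (α * γ + β * η) ^ 2 := by ring
    · -- B ≤ A, D ≤ C
      rcases le_total (γ ^ 2 + η ^ 2) (α ^ 2 + η ^ 2) with h | h
      · -- B ≤ D : key with (γ η α β): B*D ≤ (γα+ηβ)²
        have := ptolemy_key γ η α β hγ hη hα hβ (by linarith) (by linarith) (by linarith)
        calc (P * Q) ^ 2 = P ^ 2 * Q ^ 2 := by ring
          _ ≤ (γ ^ 2 + η ^ 2) * (η ^ 2 + α ^ 2) :=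
              mul_le_mul hP2 (by linarith) hQsq (by positivity)
          _ ≤ (γ * α + η * β) ^ 2 := this
          _ = (α * γ + β * η) ^ 2 := by ring
      · -- D ≤ B : key with (α η γ β): D*B ≤ (αγ+ηβ)²
        have := ptolemy_key α η γ β hα hη hγ hβ (by linarith) (by linarith) (by linarith)
        calc (P * Q) ^ 2 = Q ^ 2 * P ^ 2 := by ring
          _ ≤ (α ^ 2 + η ^ 2) * (η ^ 2 + γ ^ 2) :=
              mul_le_mul hQ2 (by linarith) (sq_nonneg P) (by positivity)
          _ ≤ (α * γ + η * β) ^ 2 := this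
          _ = (α * γ + β * η) ^ 2 := by ring
  have hPQ : 0 ≤ P * Q := mul_nonneg hP hQ
  nlinarith [hsq, hPQ, hR]

/-- The square root of any metric satisfies the Ptolemy inequality. -/
theorem sqrt_metric_ptolemy {X : Type*} [MetricSpace X] (y₁ y₂ y₃ y₄ : X) :
    Real.sqrt (dist y₁ y₃) * Real.sqrt (dist y₂ y₄) ≤
      Real.sqrt (dist y₁ y₂) * Real.sqrt (dist y₃ y₄) +
        Real.sqrt (dist y₂ y₃) * Real.sqrt (dist y₄ y₁) := by
  have sq_sqrt_dist : ∀ x y : X, Real.sqrt (dist x y) ^ 2 = dist x y := fun x y =>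
    Real.sq_sqrt dist_nonneg
  apply ptolemy_min4 (Real.sqrt (dist y₁ y₂)) (Real.sqrt (dist y₂ y₃))
      (Real.sqrt (dist y₃ y₄)) (Real.sqrt (dist y₄ y₁))
      (Real.sqrt (dist y₁ y₃)) (Real.sqrt (dist y₂ y₄))
      (Real.sqrt_nonneg _) (Real.sqrt_nonneg _) (Real.sqrt_nonneg _) (Real.sqrt_nonneg _)
      (Real.sqrt_nonneg _) (Real.sqrt_nonneg _)
  · rw [sq_sqrt_dist, sq_sqrt_dist, sq_sqrt_dist]
    exact dist_triangle y₁ y₂ y₃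
  · rw [sq_sqrt_dist, sq_sqrt_dist, sq_sqrt_dist]
    calc dist y₁ y₃ ≤ dist y₁ y₄ + dist y₄ y₃ := dist_triangle y₁ y₄ y₃
      _ = dist y₃ y₄ + dist y₄ y₁ := by rw [dist_comm y₁ y₄, dist_comm y₄ y₃]; ring
  · rw [sq_sqrt_dist, sq_sqrt_dist, sq_sqrt_dist]
    exact dist_triangle y₂ y₃ y₄
  · rw [sq_sqrt_dist, sq_sqrt_dist, sq_sqrt_dist]
    calc dist y₂ y₄ ≤ dist y₂ y₁ + dist y₁ y₄ := dist_triangle y₂ y₁ y₄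
      _ = dist y₁ y₂ + dist y₄ y₁ := by rw [dist_comm y₂ y₁, dist_comm y₁ y₄]
end

section
/- For all real numbers q₂ ≥ 0, q₃ ≥ 0 and ε ≥ 0 one has √((q₂+q₃+ε)(q₂+q₃)) ≤ √(q₃(q₃+ε)) + √(q₂(q₂+ε)). -/
/-- Key elementary inequality in the proof that the square root of any metric
satisfies the Ptolemy inequality. -/
theorem key_sqrt_inequality (q₂ q₃ ε : ℝ) (hq₂ : 0 ≤ q₂) (hq₃ : 0 ≤ q₃) (hε : 0 ≤ ε) :
    Real.sqrt ((q₂ + q₃ + ε) * (q₂ + q₃)) ≤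
      Real.sqrt (q₃ * (q₃ + ε)) + Real.sqrt (q₂ * (q₂ + ε)) := by
  have h3 : 0 ≤ q₃ * (q₃ + ε) := mul_nonneg hq₃ (by linarith)
  have h2 : 0 ≤ q₂ * (q₂ + ε) := mul_nonneg hq₂ (by linarith)
  have hcross : q₂ * q₃ ≤ Real.sqrt (q₃ * (q₃ + ε)) * Real.sqrt (q₂ * (q₂ + ε)) := by
    rw [← Real.sqrt_mul h3]
    rw [show q₂ * q₃ = Real.sqrt ((q₂ * q₃) ^ 2) by
      rw [Real.sqrt_sq (mul_nonneg hq₂ hq₃)]]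
    apply Real.sqrt_le_sqrt
    nlinarith [mul_nonneg (mul_nonneg hq₂ (mul_nonneg hq₃ hq₃)) hε, mul_nonneg (mul_nonneg (mul_nonneg hq₂ hq₂) hq₃) hε, mul_nonneg (mul_nonneg hq₂ hq₃) (mul_nonneg hε hε)]
  have key : (q₂ + q₃ + ε) * (q₂ + q₃) ≤
      (Real.sqrt (q₃ * (q₃ + ε)) + Real.sqrt (q₂ * (q₂ + ε))) ^ 2 := by
    have e3 := Real.sq_sqrt h3
    have e2 := Real.sq_sqrt h2
    nlinarith
  calc Real.sqrt ((q₂ + q₃ + ε) * (q₂ + q₃))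
      ≤ Real.sqrt ((Real.sqrt (q₃ * (q₃ + ε)) + Real.sqrt (q₂ * (q₂ + ε))) ^ 2) :=
        Real.sqrt_le_sqrt key
    _ = _ := Real.sqrt_sq (by positivity)
end

section
/- Let ρ be a quasi-metric on a set Z (i.e. a K-quasi-metric for some K ≥ 1) which is LM, and let 0 < s ≤ 1. Then ρ^s (the function (z,z') ↦ ρ(z,z')^s) is also LM. -/
/-- A `K`-quasi-metric on a set `Z`. -/
def IsQuasiMetric {Z : Type*} (K : ℝ) (ρ : Z → Z → ℝ) : Prop :=
  (∀ z z', 0 ≤ ρ z z') ∧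
  (∀ z z', ρ z z' = 0 ↔ z = z') ∧
  (∀ z z', ρ z z' = ρ z' z) ∧
  (∀ z z' z'', ρ z z'' ≤ K * max (ρ z z') (ρ z' z''))

/-- The chain approach: infimum of `ρ`-sums over all finite chains from `z` to `z'`. -/
noncomputable def chainApproach {Z : Type*} (ρ : Z → Z → ℝ) (z z' : Z) : ℝ :=
  sInf {s : ℝ | ∃ (n : ℕ) (f : ℕ → Z), f 0 = z ∧ f (n + 1) = z' ∧
    s = ∑ i ∈ Finset.range (n + 1), ρ (f i) (f (i + 1))}

/-- A quasi-metric is LM (Lipschitz metrizable) if its chain approach is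
bi-Lipschitz to it. -/
def IsLM {Z : Type*} (ρ : Z → Z → ℝ) : Prop :=
  ∃ c : ℝ, 1 ≤ c ∧ ∀ z z',
    (1 / c) * ρ z z' ≤ chainApproach ρ z z' ∧ chainApproach ρ z z' ≤ c * ρ z z'

/-- Subadditivity of `x ↦ x ^ s` for `0 < s ≤ 1` on nonnegative reals. -/
lemma aux_add_rpow_le {s : ℝ} (hs : 0 < s) (hs1 : s ≤ 1) {a b : ℝ}
    (ha : 0 ≤ a) (hb : 0 ≤ b) : (a + b) ^ s ≤ a ^ s + b ^ s := by
  lift a to NNReal using ha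
  lift b to NNReal using hb
  have := NNReal.rpow_add_le_add_rpow a b hs.le hs1
  exact_mod_cast this

/-- Subadditivity of `x ↦ x ^ s` over finite sums. -/
lemma aux_sum_rpow_le {s : ℝ} (hs : 0 < s) (hs1 : s ≤ 1) (g : ℕ → ℝ)
    (hg : ∀ i, 0 ≤ g i) (n : ℕ) :
    (∑ i ∈ Finset.range n, g i) ^ s ≤ ∑ i ∈ Finset.range n, g i ^ s := by
  induction n with
  | zero => simp [Real.zero_rpow hs.ne']
  | succ n ih =>
    rw [Finset.sum_range_succ, Finset.sum_range_succ]
    calc (∑ i ∈ Finset.range n, g i + g n) ^ s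
        ≤ (∑ i ∈ Finset.range n, g i) ^ s + g n ^ s :=
          aux_add_rpow_le hs hs1 (Finset.sum_nonneg fun i _ => hg i) (hg n)
      _ ≤ ∑ i ∈ Finset.range n, g i ^ s + g n ^ s := by linarith

/-- If a quasi-metric `ρ` is LM, then so is `ρ^s` for every `0 < s ≤ 1`. -/
theorem isLM_rpow {Z : Type*} (ρ : Z → Z → ℝ)
    (hρ : ∃ K : ℝ, 1 ≤ K ∧ IsQuasiMetric K ρ) (hLM : IsLM ρ)
    (s : ℝ) (hs : 0 < s) (hs1 : s ≤ 1) :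
    IsLM (fun z z' => ρ z z' ^ s) := by
  obtain ⟨K, hK, hnn, -, -, -⟩ := hρ
  obtain ⟨c, hc, hlm⟩ := hLM
  have hc0 : 0 < c := lt_of_lt_of_le one_pos hc
  refine ⟨c, hc, fun z z' => ?_⟩
  set T : Set ℝ := {t : ℝ | ∃ (n : ℕ) (f : ℕ → Z), f 0 = z ∧ f (n + 1) = z' ∧
    t = ∑ i ∈ Finset.range (n + 1), ρ (f i) (f (i + 1)) ^ s} with hTdef
  have hca : chainApproach (fun z z' => ρ z z' ^ s) z z' = sInf T := rfl
  -- the original chain set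
  set S : Set ℝ := {t : ℝ | ∃ (n : ℕ) (f : ℕ → Z), f 0 = z ∧ f (n + 1) = z' ∧
    t = ∑ i ∈ Finset.range (n + 1), ρ (f i) (f (i + 1))} with hSdef
  have hcaS : chainApproach ρ z z' = sInf S := rfl
  have hSbdd : BddBelow S := by
    refine ⟨0, fun t ht => ?_⟩
    obtain ⟨n, f, -, -, rfl⟩ := ht
    exact Finset.sum_nonneg fun i _ => hnn _ _
  have hTbdd : BddBelow T := by
    refine ⟨0, fun t ht => ?_⟩
    obtain ⟨n, f, -, -, rfl⟩ := ht
    exact Finset.sum_nonneg fun i _ => Real.rpow_nonneg (hnn _ _) s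
  have hmem : (ρ z z' ^ s) ∈ T := by
    refine ⟨0, fun i => if i = 0 then z else z', by simp, by simp, by simp⟩
  have hTne : T.Nonempty := ⟨_, hmem⟩
  have hρs_nonneg : 0 ≤ ρ z z' ^ s := Real.rpow_nonneg (hnn _ _) s
  constructor
  · -- lower bound
    rw [hca]
    refine le_csInf hTne fun t ht => ?_
    obtain ⟨n, f, hf0, hfn, rfl⟩ := ht
    set A := ∑ i ∈ Finset.range (n + 1), ρ (f i) (f (i + 1)) with hA
    have hA_nonneg : 0 ≤ A := Finset.sum_nonneg fun i _ => hnn _ _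
    have hA_mem : A ∈ S := ⟨n, f, hf0, hfn, rfl⟩
    have h1 : (1 / c) * ρ z z' ≤ A := le_trans (hlm z z').1 (hcaS ▸ csInf_le hSbdd hA_mem)
    have h2 : ρ z z' ≤ c * A := by
      rw [div_mul_eq_mul_div, one_mul, div_le_iff₀ hc0] at h1
      linarith [h1]
    have h3 : ρ z z' ^ s ≤ (c * A) ^ s :=
      Real.rpow_le_rpow (hnn _ _) h2 hs.le
    have h4 : (c * A) ^ s = c ^ s * A ^ s := Real.mul_rpow hc0.le hA_nonneg
    have h5 : A ^ s ≤ ∑ i ∈ Finset.range (n + 1), ρ (f i) (f (i + 1)) ^ s :=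
      aux_sum_rpow_le hs hs1 (fun i => ρ (f i) (f (i + 1))) (fun i => hnn _ _) (n + 1)
    have hcs : c ^ s ≤ c := by
      calc c ^ s ≤ c ^ (1 : ℝ) := Real.rpow_le_rpow_of_exponent_le hc hs1
        _ = c := Real.rpow_one c
    have hcs_nonneg : 0 ≤ c ^ s := Real.rpow_nonneg hc0.le s
    have hsum_nonneg : 0 ≤ ∑ i ∈ Finset.range (n + 1), ρ (f i) (f (i + 1)) ^ s :=
      Finset.sum_nonneg fun i _ => Real.rpow_nonneg (hnn _ _) s
    have h6 : ρ z z' ^ s ≤ c * ∑ i ∈ Finset.range (n + 1), ρ (f i) (f (i + 1)) ^ s := by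
      calc ρ z z' ^ s ≤ c ^ s * A ^ s := by rw [← h4]; exact h3
        _ ≤ c ^ s * ∑ i ∈ Finset.range (n + 1), ρ (f i) (f (i + 1)) ^ s :=
            mul_le_mul_of_nonneg_left h5 hcs_nonneg
        _ ≤ c * ∑ i ∈ Finset.range (n + 1), ρ (f i) (f (i + 1)) ^ s :=
            mul_le_mul_of_nonneg_right hcs hsum_nonneg
    rw [div_mul_eq_mul_div, one_mul, div_le_iff₀ hc0, mul_comm]
    exact h6
  · -- upper bound
    rw [hca]
    calc sInf T ≤ ρ z z' ^ s := csInf_le hTbdd hmem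
      _ ≤ c * ρ z z' ^ s := le_mul_of_one_le_left hρs_nonneg hc
end

section
/- Let (Z,d) be a metric space. For z ∈ Z define the involution d_z : (Z∖{z}) × (Z∖{z}) → [0,∞) by d_z(a,b) = d(a,b)/(d(a,z)·d(b,z)). Then d_z satisfies the triangle inequality d_z(a,c) ≤ d_z(a,b) + d_z(b,c) for every z ∈ Z and all a, b, c ∈ Z∖{z} if and only if d satisfies the Ptolemy inequality. -/
/-
Multiplying the triangle inequality for `d_z` at `(a, b, c)` by the positive number
`d(a,z) d(b,z) d(c,z)` turns it into the Ptolemy inequality for the quadruple `(a, b, c, z)`.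
Quadruples in which the fourth point repeats one of the others satisfy Ptolemy trivially.
-/

lemma div_le_div_add_div_iff_mul_le {p q r x y w : ℝ} (hp : 0 < p) (hq : 0 < q) (hr : 0 < r) :
    x / (p * r) ≤ y / (p * q) + w / (q * r) ↔ x * q ≤ y * r + w * p := by
  have hpqr : 0 < p * q * r := by positivity
  rw [show x / (p * r) = x * q / (p * q * r) by field_simp,
    show y / (p * q) = y * r / (p * q * r) by field_simp,
    show w / (q * r) = w * p / (p * q * r) by field_simp,
    ← add_div, div_le_div_iff_of_pos_right hpqr]

lemma dist_div_le_iff_ptolemy {Z : Type*} [MetricSpace Z] {z a b c : Z}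
    (ha : a ≠ z) (hb : b ≠ z) (hc : c ≠ z) :
    dist a c / (dist a z * dist c z) ≤
        dist a b / (dist a z * dist b z) + dist b c / (dist b z * dist c z) ↔
      dist a c * dist b z ≤ dist a b * dist c z + dist b c * dist z a := by
  rw [dist_comm z a]
  exact div_le_div_add_div_iff_mul_le (dist_pos.2 ha) (dist_pos.2 hb) (dist_pos.2 hc)

lemma ptolemy_of_degenerate {Z : Type*} [PseudoMetricSpace Z] {y₁ y₂ y₃ y₄ : Z}
    (h : y₄ = y₁ ∨ y₄ = y₂ ∨ y₄ = y₃) :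
    dist y₁ y₃ * dist y₂ y₄ ≤ dist y₁ y₂ * dist y₃ y₄ + dist y₂ y₃ * dist y₄ y₁ := by
  rcases h with rfl | rfl | rfl
  · simp [dist_comm, mul_comm]
  · simp only [dist_self, mul_zero]
    positivity
  · simp [dist_comm, mul_comm]

/-- The involution `d_z(a,b) = d(a,b)/(d(a,z)·d(b,z))` satisfies the triangle inequality
for every basepoint `z` if and only if `d` satisfies the Ptolemy inequality. -/
theorem involution_triangle_iff_ptolemy {Z : Type*} [MetricSpace Z] :
    (∀ z a b c : Z, a ≠ z → b ≠ z → c ≠ z →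
      dist a c / (dist a z * dist c z) ≤
        dist a b / (dist a z * dist b z) + dist b c / (dist b z * dist c z)) ↔
    (∀ y₁ y₂ y₃ y₄ : Z,
      dist y₁ y₃ * dist y₂ y₄ ≤ dist y₁ y₂ * dist y₃ y₄ + dist y₂ y₃ * dist y₄ y₁) := by
  constructor
  · intro h y₁ y₂ y₃ y₄
    by_cases hdeg : y₄ = y₁ ∨ y₄ = y₂ ∨ y₄ = y₃
    · exact ptolemy_of_degenerate hdeg
    obtain ⟨h₁, h₂, h₃⟩ : y₁ ≠ y₄ ∧ y₂ ≠ y₄ ∧ y₃ ≠ y₄ := by tauto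
    exact (dist_div_le_iff_ptolemy h₁ h₂ h₃).1 (h y₄ y₁ y₂ y₃ h₁ h₂ h₃)
  · intro h z a b c ha hb hc
    exact (dist_div_le_iff_ptolemy ha hb hc).2 (h a b c z)
end

section
/- Let θ ∈ (0,π] and let h : (0,∞) → [0,∞) be the function determined by cosh(h(t)) = cosh²(t) − sinh²(t)·cos(θ) (equivalently, assume h(t) ≥ 0 and cosh(h(t)) = cosh²(t) − sinh²(t)·cos(θ) for all t > 0). Then e^{h(t)}·e^{−2t} → sin²(θ/2) as t → ∞; in particular (e^{h(t)}·e^{−2t})^{1/2} → sin(θ/2). -/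
open Filter Real

/-- For `θ ∈ (0,π]` and `h(t) ≥ 0` with `cosh(h(t)) = cosh²(t) − sinh²(t)·cos θ`,
one has `e^{h(t)}·e^{−2t} → sin²(θ/2)` as `t → ∞`; in particular
`(e^{h(t)}·e^{−2t})^{1/2} → sin(θ/2)`. -/
theorem bourdon_metric_limit (θ : ℝ) (hθ₀ : 0 < θ) (hθπ : θ ≤ Real.pi) (h : ℝ → ℝ)
    (hnn : ∀ t : ℝ, 0 < t → 0 ≤ h t)
    (hcosh : ∀ t : ℝ, 0 < t →
      Real.cosh (h t) = Real.cosh t ^ 2 - Real.sinh t ^ 2 * Real.cos θ) :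
    Tendsto (fun t => Real.exp (h t) * Real.exp (-2 * t)) atTop
      (nhds (Real.sin (θ / 2) ^ 2)) ∧
    Tendsto (fun t => (Real.exp (h t) * Real.exp (-2 * t)) ^ ((1 : ℝ) / 2)) atTop
      (nhds (Real.sin (θ / 2))) := by
  have hs : 0 ≤ Real.sin (θ / 2) := by
    apply Real.sin_nonneg_of_nonneg_of_le_pi <;> linarith [Real.pi_pos]
  have hsq : Real.sin (θ / 2) ^ 2 = (1 - Real.cos θ) / 2 := by
    rw [Real.sin_sq_eq_half_sub, show 2 * (θ / 2) = θ from by ring]; ring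
  -- e t := exp(-2t) tends to 0
  have he : Tendsto (fun t : ℝ => Real.exp (-2 * t)) atTop (nhds 0) := by
    apply Real.tendsto_exp_atBot.comp
    exact Tendsto.const_mul_atTop_of_neg (by norm_num) tendsto_id
  -- f t := cosh (h t) * exp(-2t) tends to sin(θ/2)^2 / 2
  have hf : Tendsto (fun t => Real.cosh (h t) * Real.exp (-2 * t)) atTop
      (nhds (Real.sin (θ / 2) ^ 2 / 2)) := by
    have key : ∀ᶠ t in atTop, Real.cosh (h t) * Real.exp (-2 * t) =
        ((1 + Real.exp (-2 * t)) / 2) ^ 2 * (1 - Real.cos θ)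
          + Real.cos θ * Real.exp (-2 * t) := by
      filter_upwards [eventually_gt_atTop (0 : ℝ)] with t ht
      have h1 := hcosh t ht
      have h2 : Real.sinh t ^ 2 = Real.cosh t ^ 2 - 1 := by
        rw [Real.cosh_sq]; ring
      have h3 : Real.cosh t = (Real.exp t + Real.exp (-t)) / 2 := Real.cosh_eq t
      have h4 : Real.exp t * Real.exp (-t) = 1 := by
        rw [← Real.exp_add]; simp
      have h5 : Real.exp (-t) * Real.exp (-t) = Real.exp (-2 * t) := by
        rw [← Real.exp_add]; ring_nf
      have h7 : Real.cosh t * Real.exp (-t) = (1 + Real.exp (-2 * t)) / 2 := by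
        rw [h3]; linear_combination (1 / 2) * h4 + (1 / 2) * h5
      have h8 : Real.cosh t ^ 2 * Real.exp (-2 * t) = ((1 + Real.exp (-2 * t)) / 2) ^ 2 := by
        linear_combination (Real.cosh t * Real.exp (-t)
          + (1 + Real.exp (-2 * t)) / 2) * h7 - Real.cosh t ^ 2 * h5
      rw [h1, h2]
      linear_combination (1 - Real.cos θ) * h8
    refine Tendsto.congr' (key.mono fun t ht => ht.symm) ?_
    have lim : Tendsto (fun t : ℝ => ((1 + Real.exp (-2 * t)) / 2) ^ 2 * (1 - Real.cos θ)
        + Real.cos θ * Real.exp (-2 * t)) atTop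
        (nhds (((1 + 0) / 2) ^ 2 * (1 - Real.cos θ) + Real.cos θ * 0)) := by
      exact ((((tendsto_const_nhds.add he).div_const 2).pow 2).mul_const _).add
        (he.const_mul _)
    convert lim using 2
    rw [hsq]; ring
  -- main limit
  have main : Tendsto (fun t => Real.exp (h t) * Real.exp (-2 * t)) atTop
      (nhds (Real.sin (θ / 2) ^ 2)) := by
    have key : ∀ᶠ t in atTop, Real.exp (h t) * Real.exp (-2 * t) =
        Real.cosh (h t) * Real.exp (-2 * t)
          + Real.sqrt ((Real.cosh (h t) * Real.exp (-2 * t)) ^ 2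
            - Real.exp (-2 * t) ^ 2) := by
      filter_upwards [eventually_gt_atTop (0 : ℝ)] with t ht
      have hsnn : 0 ≤ Real.sinh (h t) := Real.sinh_nonneg_iff.2 (hnn t ht)
      have h2 : Real.sinh (h t) ^ 2 = Real.cosh (h t) ^ 2 - 1 := by
        rw [Real.cosh_sq]; ring
      have h6 : (Real.cosh (h t) * Real.exp (-2 * t)) ^ 2 - Real.exp (-2 * t) ^ 2 =
          (Real.sinh (h t) * Real.exp (-2 * t)) ^ 2 := by
        rw [mul_pow, mul_pow, h2]; ring
      rw [h6, Real.sqrt_sq (by positivity), ← Real.cosh_add_sinh (h t)]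
      ring
    refine Tendsto.congr' (key.mono fun t ht => ht.symm) ?_
    have limsub : Tendsto (fun t => (Real.cosh (h t) * Real.exp (-2 * t)) ^ 2
        - Real.exp (-2 * t) ^ 2) atTop (nhds ((Real.sin (θ / 2) ^ 2 / 2) ^ 2 - 0 ^ 2)) :=
      (hf.pow 2).sub (he.pow 2)
    have limsqrt := limsub.sqrt
    have : Real.sqrt ((Real.sin (θ / 2) ^ 2 / 2) ^ 2 - 0 ^ 2)
        = Real.sin (θ / 2) ^ 2 / 2 := by
      rw [show (Real.sin (θ / 2) ^ 2 / 2) ^ 2 - 0 ^ 2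
        = (Real.sin (θ / 2) ^ 2 / 2) ^ 2 by ring]
      exact Real.sqrt_sq (by positivity)
    rw [this] at limsqrt
    have := hf.add limsqrt
    convert this using 2
    ring
  refine ⟨main, ?_⟩
  have main2 := main.sqrt
  rw [Real.sqrt_sq hs] at main2
  refine main2.congr fun t => ?_
  rw [Real.sqrt_eq_rpow]
end

section
/- Let Y be a metric space satisfying the Ptolemy inequality, let b, s ≥ 0, and let p, q, p', q' ∈ Y satisfy dist(p,q) ≤ b, dist(p',q') ≤ b, dist(p,p') ≤ s and dist(q,q') ≤ s. Then dist(p,q')·dist(q,p') ≤ b² + s²; in particular, min(dist(p,q'), dist(q,p')) ≤ √(b² + s²). -/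
/-- In a metric space satisfying the Ptolemy inequality, a quadrilateral with two opposite
sides of length `≤ b` and the other two opposite sides of length `≤ s` satisfies
`dist p q' · dist q p' ≤ b² + s²`; in particular one of the diagonals has length
`≤ √(b² + s²)`. -/
theorem ptolemy_quadrilateral_diagonal {Y : Type*} [MetricSpace Y]
    (hPt : ∀ y₁ y₂ y₃ y₄ : Y,
      dist y₁ y₃ * dist y₂ y₄ ≤ dist y₁ y₂ * dist y₃ y₄ + dist y₂ y₃ * dist y₄ y₁)
    (b s : ℝ) (hb : 0 ≤ b) (hs : 0 ≤ s) (p q p' q' : Y)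
    (hpq : dist p q ≤ b) (hp'q' : dist p' q' ≤ b)
    (hpp' : dist p p' ≤ s) (hqq' : dist q q' ≤ s) :
    dist p q' * dist q p' ≤ b ^ 2 + s ^ 2 ∧
    min (dist p q') (dist q p') ≤ Real.sqrt (b ^ 2 + s ^ 2) := by
  have key := hPt p q q' p'
  have h1 : dist p q' * dist q p' ≤ b ^ 2 + s ^ 2 := by
    have e1 : dist q' p' = dist p' q' := dist_comm _ _
    have e2 : dist p' p = dist p p' := dist_comm _ _
    calc dist p q' * dist q p' ≤ dist p q * dist q' p' + dist q q' * dist p' p := key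
      _ ≤ b * b + s * s := by
          rw [e1, e2]
          have := dist_nonneg (x := q) (y := q')
          have := dist_nonneg (x := p) (y := q)
          exact add_le_add (mul_le_mul hpq hp'q' dist_nonneg hb)
            (mul_le_mul hqq' hpp' dist_nonneg hs)
      _ = b ^ 2 + s ^ 2 := by ring
  refine ⟨h1, ?_⟩
  have hm : min (dist p q') (dist q p') ^ 2 ≤ b ^ 2 + s ^ 2 := by
    calc min (dist p q') (dist q p') ^ 2
        ≤ dist p q' * dist q p' := by
          rw [sq]
          exact mul_le_mul (min_le_left _ _) (min_le_right _ _)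
            (le_min dist_nonneg dist_nonneg) dist_nonneg
      _ ≤ b ^ 2 + s ^ 2 := h1
  calc min (dist p q') (dist q p') = Real.sqrt (min (dist p q') (dist q p') ^ 2) :=
        (Real.sqrt_sq (le_min dist_nonneg dist_nonneg)).symm
    _ ≤ Real.sqrt (b ^ 2 + s ^ 2) := Real.sqrt_le_sqrt hm
end

section
/- For every m ≥ 1 there exists n = n_m ≥ 2m with the following property. Let Y be any metric space satisfying the Ptolemy inequality, let b > 0, and let Φ : S_{n,m} → Y be any map such that dist(Φ(I),Φ(J)) ≤ b whenever d_H(I,J) = 2. Then there exist indices 1 ≤ k₁ < k₂ < … < k_{2m} ≤ n and a vertex a ∈ {0,1}^m such that dist(Φ(φ_{k₁⋯k_{2m}}(a)), Φ(φ_{k₁⋯k_{2m}}(ā))) ≤ √m · b, where ā ∈ {0,1}^m denotes the coordinatewise complement of a. -/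
/-- `S_{n,m}`: the 0-1 sequences of length `n` (modelled as functions `Fin n → ℕ` with
values in `{0,1}`) having exactly `m` entries equal to `1`. -/
def Snm (n m : ℕ) : Set (Fin n → ℕ) :=
  {f | (∀ j, f j ≤ 1) ∧ (Finset.univ.filter fun j => f j = 1).card = m}

/-- The map `φ_{k₁⋯k_{2m}} : {0,1}^m → {0,1}^n`: the `i`-th block contributes the
standard basis vector `e_{k_{2i}}` if `I i = 0` (false) and `e_{k_{2i+1}}` if
`I i = 1` (true). -/
def cubeMap {n m : ℕ} (k : Fin (2 * m) → Fin n) (I : Fin m → Bool) : Fin n → ℕ :=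
  ∑ i : Fin m,
    Pi.single
      (k (if I i then ⟨2 * i.val + 1, by have := i.isLt; omega⟩
          else ⟨2 * i.val, by have := i.isLt; omega⟩)) 1

open Classical in
/-- vertex: indicator of the sites `i*W + p i` for `i < m`. -/
noncomputable def VV (m W : ℕ) (p : ℕ → ℕ) : Fin (m * W) → ℕ :=
  fun x => if (∃ i, i < m ∧ (x : ℕ) = i * W + p i) then 1 else 0

lemma site_lt {m W i s : ℕ} (hi : i < m) (hs : s < W) : i * W + s < m * W := by
  calc i * W + s < i * W + W := by omega
  _ = (i+1) * W := by ring
  _ ≤ m * W := Nat.mul_le_mul_right _ (by omega)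

lemma site_inj {W i s i' s' : ℕ} (hs : s < W) (hs' : s' < W)
    (h : i * W + s = i' * W + s') : i = i' ∧ s = s' := by
  rcases lt_trichotomy i i' with hl | he | hl
  · exfalso
    have h2 : (i+1) * W ≤ i' * W := Nat.mul_le_mul_right _ (by omega)
    have h3 : (i+1) * W = i * W + W := by ring
    omega
  · exact ⟨he, by subst he; omega⟩
  · exfalso
    have h2 : (i'+1) * W ≤ i * W := Nat.mul_le_mul_right _ (by omega)
    have h3 : (i'+1) * W = i' * W + W := by ring
    omega

lemma VV_eq_one_iff {m W : ℕ} (p : ℕ → ℕ) (x : Fin (m*W)) :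
    VV m W p x = 1 ↔ ∃ i, i < m ∧ (x : ℕ) = i * W + p i := by
  classical
  unfold VV
  split <;> simp_all

lemma VV_congr {m W : ℕ} {p q : ℕ → ℕ} (h : ∀ i, i < m → p i = q i) :
    VV m W p = VV m W q := by
  classical
  funext x
  unfold VV
  congr 1
  exact propext ⟨fun ⟨i, hi, hx⟩ => ⟨i, hi, by rw [hx, h i hi]⟩,
                 fun ⟨i, hi, hx⟩ => ⟨i, hi, by rw [hx, h i hi]⟩⟩

lemma VV_mem_Snm {m W : ℕ} {p : ℕ → ℕ} (hp : ∀ i, i < m → p i < W) :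
    VV m W p ∈ Snm (m*W) m := by
  classical
  constructor
  · intro j
    unfold VV
    split <;> omega
  · have himg : (Finset.univ.filter fun x => VV m W p x = 1) =
        Finset.univ.image (fun i : Fin m => (⟨(i:ℕ) * W + p i,
          site_lt i.isLt (hp i i.isLt)⟩ : Fin (m*W))) := by
      ext x
      simp only [Finset.mem_filter, Finset.mem_univ, true_and, Finset.mem_image]
      rw [VV_eq_one_iff]
      constructor
      · rintro ⟨i, hi, hx⟩
        exact ⟨⟨i, hi⟩, by ext; simp [hx]⟩
      · rintro ⟨i, hxi⟩
        exact ⟨i, i.isLt, by rw [← hxi]⟩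
    rw [himg, Finset.card_image_of_injective _ ?_, Finset.card_univ, Fintype.card_fin]
    intro i j hij
    have := (Fin.mk.injEq _ _ _ _).mp hij
    have h2 := site_inj (hp i i.isLt) (hp j j.isLt) this
    exact Fin.ext h2.1

lemma hamming_VV_swap {m W : ℕ} {p q : ℕ → ℕ} {i₀ : ℕ}
    (hp : ∀ i, i < m → p i < W) (hq : ∀ i, i < m → q i < W)
    (hi₀ : i₀ < m) (hne : p i₀ ≠ q i₀) (heq : ∀ i, i < m → i ≠ i₀ → p i = q i) :
    hammingDist (VV m W p) (VV m W q) = 2 := by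
  classical
  have hcard : hammingDist (VV m W p) (VV m W q)
      = (Finset.univ.filter fun x => VV m W p x ≠ VV m W q x).card := rfl
  rw [hcard]
  have hsp : (i₀ * W + p i₀) < m * W := site_lt hi₀ (hp i₀ hi₀)
  have hsq : (i₀ * W + q i₀) < m * W := site_lt hi₀ (hq i₀ hi₀)
  have hset : (Finset.univ.filter fun x => VV m W p x ≠ VV m W q x)
      = {(⟨i₀ * W + p i₀, hsp⟩ : Fin (m*W)), ⟨i₀ * W + q i₀, hsq⟩} := by
    ext x
    simp only [Finset.mem_filter, Finset.mem_univ, true_and, Finset.mem_insert,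
      Finset.mem_singleton]
    constructor
    · intro hne'
      by_cases h1 : ∃ i, i < m ∧ (x : ℕ) = i * W + p i
      · obtain ⟨i, hi, hx⟩ := h1
        by_cases hii : i = i₀
        · subst hii
          left; exact Fin.ext hx
        · exfalso
          apply hne'
          rw [(VV_eq_one_iff p x).mpr ⟨i, hi, hx⟩,
            (VV_eq_one_iff q x).mpr ⟨i, hi, by rw [hx, heq i hi hii]⟩]
      · by_cases h2 : ∃ i, i < m ∧ (x : ℕ) = i * W + q i
        · obtain ⟨i, hi, hx⟩ := h2
          by_cases hii : i = i₀
          · subst hii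
            right; exact Fin.ext hx
          · exfalso
            apply hne'
            rw [(VV_eq_one_iff p x).mpr ⟨i, hi, by rw [hx, heq i hi hii]⟩,
              (VV_eq_one_iff q x).mpr ⟨i, hi, hx⟩]
        · exfalso
          apply hne'
          have e1 : VV m W p x = 0 := by unfold VV; split <;> simp_all
          have e2 : VV m W q x = 0 := by unfold VV; split <;> simp_all
          rw [e1, e2]
    · intro hx
      rcases hx with hx | hx
      · have e1 : VV m W p x = 1 := (VV_eq_one_iff p x).mpr ⟨i₀, hi₀, by rw [hx]⟩
        have e2 : VV m W q x = 0 := by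
          unfold VV
          split
          · next h2 =>
            exfalso
            obtain ⟨i, hi, hxi⟩ := h2
            rw [hx] at hxi
            have := site_inj (hp i₀ hi₀) (hq i hi) hxi
            exact hne (by rw [this.2, this.1])
          · rfl
        rw [e1, e2]; omega
      · have e1 : VV m W q x = 1 := (VV_eq_one_iff q x).mpr ⟨i₀, hi₀, by rw [hx]⟩
        have e2 : VV m W p x = 0 := by
          unfold VV
          split
          · next h2 =>
            exfalso
            obtain ⟨i, hi, hxi⟩ := h2
            rw [hx] at hxi
            have := site_inj (hq i₀ hi₀) (hp i hi) hxi
            exact hne (by rw [this.2, ← this.1])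
          · rfl
        rw [e1, e2]; omega
  rw [hset]
  rw [Finset.card_insert_of_notMem, Finset.card_singleton]
  simp only [Finset.mem_singleton]
  intro h
  have := (Fin.mk.injEq _ _ _ _).mp h
  exact hne (site_inj (hp i₀ hi₀) (hq i₀ hi₀) this).2

/-- Monochromatic product-subgrid lemma: for any coloring of `d`-dimensional grids
with finitely many colors, there is `R` such that any coloring of `[0,R)^d`
admits per-dimension strictly monotone selections of `[0,R')` on which the
coloring is constant. -/
theorem gridMono : ∀ (d : ℕ) (κ : Type) [Fintype κ] [Nonempty κ] (R' : ℕ),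
    ∃ R, R' ≤ R ∧ ∀ f : (Fin d → ℕ) → κ, ∃ (τ : Fin d → ℕ → ℕ) (c : κ),
      (∀ j, ∀ s, s < R' → τ j s < R) ∧
      (∀ j, ∀ s1 s2, s1 < s2 → s2 < R' → τ j s1 < τ j s2) ∧
      (∀ g : Fin d → ℕ, (∀ j, g j < R') → f (fun j => τ j (g j)) = c) := by
  intro d
  induction d with
  | zero =>
    intro κ _ _ R'
    refine ⟨R', le_refl _, fun f => ⟨fun _ _ => 0, f (fun _ => 0), ?_, ?_, ?_⟩⟩
    · intro j; exact j.elim0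
    · intro j; exact j.elim0
    · intro g _
      exact congrArg f (funext fun j => j.elim0)
  | succ d ih =>
    intro κ _ _ R'
    classical
    set Rx := Fintype.card κ * R' + 1 with hRx
    obtain ⟨Rrest, hRrest, hih⟩ := ih (Fin Rx → κ) R'
    have hR'Rx : R' ≤ Rx := by
      have h1 : 1 * R' ≤ Fintype.card κ * R' :=
        Nat.mul_le_mul_right _ (Nat.one_le_iff_ne_zero.mpr Fintype.card_ne_zero)
      omega
    refine ⟨max Rx Rrest, le_trans hR'Rx (le_max_left _ _), fun f => ?_⟩
    set F : (Fin d → ℕ) → (Fin Rx → κ) := fun g x => f (Fin.cons (x : ℕ) g) with hF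
    obtain ⟨τr, cr, hτr1, hτr2, hτr3⟩ := hih F
    -- pigeonhole on cr : Fin Rx → κ
    have hpig : ∃ y ∈ (Finset.univ : Finset κ),
        R' - 1 < (Finset.univ.filter fun x : Fin Rx => cr x = y).card := by
      apply Finset.exists_lt_card_fiber_of_mul_lt_card_of_maps_to
      · intro a _; exact Finset.mem_univ _
      · rw [Finset.card_univ, Finset.card_univ, Fintype.card_fin]
        have h1 : Fintype.card κ * (R' - 1) ≤ Fintype.card κ * R' :=
          Nat.mul_le_mul_left _ (by omega)
        omega
    obtain ⟨c, _, hc⟩ := hpig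
    set S := (Finset.univ.filter fun x : Fin Rx => cr x = c) with hS
    have hcard : R' ≤ S.card := by omega
    set e := S.orderEmbOfCardLe hcard with he
    set τ0 : ℕ → ℕ := fun s => if h : s < R' then ((e ⟨s, h⟩ : Fin Rx) : ℕ) else 0 with hτ0
    refine ⟨Fin.cons τ0 τr, c, ?_, ?_, ?_⟩
    · intro j s hs
      refine Fin.cases ?_ ?_ j
      · simp only [Fin.cons_zero, hτ0, dif_pos hs]
        exact lt_of_lt_of_le (e ⟨s, hs⟩).isLt (le_max_left _ _)
      · intro jj
        simp only [Fin.cons_succ]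
        exact lt_of_lt_of_le (hτr1 jj s hs) (le_max_right _ _)
    · intro j s1 s2 h12 h2
      refine Fin.cases ?_ ?_ j
      · have h1 : s1 < R' := lt_trans h12 h2
        simp only [Fin.cons_zero, hτ0, dif_pos h1, dif_pos h2]
        have : (⟨s1, h1⟩ : Fin R') < ⟨s2, h2⟩ := h12
        exact_mod_cast (e.lt_iff_lt).mpr this
      · intro jj
        simp only [Fin.cons_succ]
        exact hτr2 jj s1 s2 h12 h2
    · intro g hg
      have hgs : (fun j : Fin (d+1) => (Fin.cons τ0 τr : ∀ _ : Fin (d+1), ℕ → ℕ) j (g j))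
          = Fin.cons (τ0 (g 0)) (fun j : Fin d => τr j (g j.succ)) := by
        funext j
        refine Fin.cases ?_ ?_ j
        · simp
        · intro jj; simp
      rw [hgs]
      have h0 : g 0 < R' := hg 0
      have hτ0v : τ0 (g 0) = ((e ⟨g 0, h0⟩ : Fin Rx) : ℕ) := by
        simp [hτ0, dif_pos h0]
      have hmem : e ⟨g 0, h0⟩ ∈ S := S.orderEmbOfCardLe_mem hcard _
      have hcrc : cr (e ⟨g 0, h0⟩) = c := by
        simp only [hS, Finset.mem_filter] at hmem
        exact hmem.2
      have hrest := hτr3 (fun j => g j.succ) (fun j => hg j.succ)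
      have : f (Fin.cons (τ0 (g 0)) (fun j : Fin d => τr j (g j.succ)))
          = F (fun j => τr j (g j.succ)) ⟨τ0 (g 0), by
              rw [hτ0v]; exact (e ⟨g 0, h0⟩).isLt⟩ := rfl
      rw [this, hrest]
      have h2 : (⟨τ0 (g 0), by rw [hτ0v]; exact (e ⟨g 0, h0⟩).isLt⟩ : Fin Rx)
          = e ⟨g 0, h0⟩ := by
        apply Fin.ext
        exact hτ0v
      rw [h2, hcrc]

def merge (t : ℕ) (p : ℕ → ℕ) (σ : ℕ → ℕ → ℕ) (g : ℕ → ℕ) : ℕ → ℕ :=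
  fun i => if i < t then p i else σ i (g i)

def upd (g : ℕ → ℕ) (t s : ℕ) : ℕ → ℕ := fun i => if i = t then s else g i

def extendF (d : ℕ) (z : Fin d → ℕ) : ℕ → ℕ :=
  fun i => if h : i < d then z ⟨i, h⟩ else 0

def liftg (t m : ℕ) (y : ℕ → ℕ) : ℕ → ℕ :=
  fun i => if t + 1 ≤ i ∧ i < m then y (i - (t+1)) else 0

def sig' (t m d : ℕ) (σ : ℕ → ℕ → ℕ) (τ : Fin d → ℕ → ℕ) : ℕ → ℕ → ℕ :=
  fun i s => if t + 1 ≤ i ∧ i < m then σ i (extendF d (fun j => τ j s) (i - (t+1))) else 0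

lemma merge_lt {m W t : ℕ} {p : ℕ → ℕ} {σ : ℕ → ℕ → ℕ} {g : ℕ → ℕ}
    (hp : ∀ i, i < t → p i < W) (hσg : ∀ i, t ≤ i → i < m → σ i (g i) < W) :
    ∀ i, i < m → merge t p σ g i < W := by
  intro i hi
  unfold merge
  by_cases h : i < t
  · rw [if_pos h]; exact hp i h
  · rw [if_neg h]; exact hσg i (by omega) hi

/-- The key translation between the two descriptions of the vertices. -/
lemma merge_eq {m t d : ℕ} (ht : t + 1 + d = m) (f : ℕ → ℕ) (σ : ℕ → ℕ → ℕ)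
    (τ : Fin d → ℕ → ℕ) (s : ℕ) (g : ℕ → ℕ) :
    ∀ i, i < m →
      merge t f σ (upd (liftg t m (extendF d (fun j => τ j (g (t+1+(j:ℕ)))))) t s) i
      = merge (t+1) (upd f t (σ t s)) (sig' t m d σ τ) g i := by
  intro i hi
  by_cases h1 : i < t
  · unfold merge upd
    rw [if_pos h1, if_pos (show i < t + 1 by omega), if_neg (show i ≠ t by omega)]
  by_cases h2 : i = t
  · subst h2
    unfold merge upd
    rw [if_neg (lt_irrefl i), if_pos (rfl : i = i), if_pos (show i < i + 1 by omega),
      if_pos (rfl : i = i)]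
  · have h3 : t + 1 ≤ i := by omega
    have h4 : i - (t+1) < d := by omega
    unfold merge upd liftg sig' extendF
    rw [if_neg h1, if_neg h2, if_neg (show ¬ i < t + 1 by omega),
      if_pos (show t + 1 ≤ i ∧ i < m from ⟨h3, hi⟩),
      if_pos (show t + 1 ≤ i ∧ i < m from ⟨h3, hi⟩)]
    rw [dif_pos h4, dif_pos h4]
    have h5 : t + 1 + (i - (t+1)) = i := by omega
    show σ i (τ ⟨i-(t+1), h4⟩ (g (t+1+(i-(t+1))))) = σ i (τ ⟨i-(t+1), h4⟩ (g i))
    rw [h5]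

theorem masterLemma (m : ℕ) : ∀ d, d ≤ m → ∃ R, 2 ≤ R ∧
    ∀ (W : ℕ) (Y : Type*) [MetricSpace Y],
    (∀ y₁ y₂ y₃ y₄ : Y,
      dist y₁ y₃ * dist y₂ y₄ ≤ dist y₁ y₂ * dist y₃ y₄ + dist y₂ y₃ * dist y₄ y₁) →
    ∀ (b : ℝ), 0 < b → ∀ (Φ : (Fin (m*W) → ℕ) → Y),
    (∀ I ∈ Snm (m*W) m, ∀ J ∈ Snm (m*W) m, hammingDist I J = 2 → dist (Φ I) (Φ J) ≤ b) →
    ∀ (t : ℕ), t + d = m → ∀ (p q : ℕ → ℕ) (σ : ℕ → ℕ → ℕ),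
    (∀ i, i < t → p i < W) → (∀ i, i < t → q i < W) → (∀ i, i < t → p i ≠ q i) →
    (∀ i, t ≤ i → i < m → ∀ s, s < R → σ i s < W) →
    (∀ i, t ≤ i → i < m → ∀ s1 s2, s1 < s2 → s2 < R → σ i s1 < σ i s2) →
    (∀ g : ℕ → ℕ, (∀ i, t ≤ i → i < m → g i < R) →
      dist (Φ (VV m W (merge t p σ g))) (Φ (VV m W (merge t q σ g)))
        ≤ Real.sqrt t * b) →
    ∃ p' q' : ℕ → ℕ, (∀ i, i < m → p' i < W) ∧ (∀ i, i < m → q' i < W) ∧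
      (∀ i, i < m → p' i ≠ q' i) ∧
      dist (Φ (VV m W p')) (Φ (VV m W q')) ≤ Real.sqrt m * b := by
  intro d
  induction d with
  | zero =>
    intro _
    refine ⟨2, le_refl _, ?_⟩
    intro W Y _ hpt b hb Φ hΦ t ht p q σ hp hq hpq hσ1 hσ2 hgood
    have htm : t = m := by omega
    refine ⟨p, q, fun i hi => hp i (by omega), fun i hi => hq i (by omega),
      fun i hi => hpq i (by omega), ?_⟩
    have h0 := hgood (fun _ => 0) (by intro i h1 h2; omega)
    have e1 : VV m W (merge t p σ (fun _ => 0)) = VV m W p :=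
      VV_congr (fun i hi => by unfold merge; rw [if_pos (show i < t by omega)])
    have e2 : VV m W (merge t q σ (fun _ => 0)) = VV m W q :=
      VV_congr (fun i hi => by unfold merge; rw [if_pos (show i < t by omega)])
    rw [e1, e2, htm] at h0
    exact h0
  | succ d ih =>
    intro hdm
    obtain ⟨R1, hR1, hprop⟩ := ih (by omega)
    obtain ⟨RG, hRG, hgrid⟩ := gridMono d Bool R1
    refine ⟨max RG 2, le_max_right _ _, ?_⟩
    intro W Y _ hpt b hb Φ hΦ t ht p q σ hp hq hpq hσ1 hσ2 hgood
    have htm : t < m := by omega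
    have htm1 : t + 1 + d = m := by omega
    have h0R : (0:ℕ) < max RG 2 := by omega
    have h1R : (1:ℕ) < max RG 2 := by omega
    have hαW : σ t 0 < W := hσ1 t (le_refl _) htm 0 h0R
    have hβW : σ t 1 < W := hσ1 t (le_refl _) htm 1 h1R
    have hαβ : σ t 0 ≠ σ t 1 := Nat.ne_of_lt (hσ2 t (le_refl _) htm 0 1 (by omega) h1R)
    have hsbpos : 0 < Real.sqrt ((t:ℝ)+1) * b := by
      apply mul_pos _ hb
      apply Real.sqrt_pos.mpr
      positivity
    classical
    obtain ⟨τ, c, hτ1, hτ2, hτ3⟩ := hgrid (fun z =>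
      if dist (Φ (VV m W (merge t p σ (upd (liftg t m (extendF d z)) t 0))))
              (Φ (VV m W (merge t q σ (upd (liftg t m (extendF d z)) t 1))))
          ≤ Real.sqrt ((t:ℝ)+1) * b
      then true else false)
    -- the main dichotomy
    have main : ∀ g : ℕ → ℕ, (∀ i, t+1 ≤ i → i < m → g i < R1) →
        (c = true → dist (Φ (VV m W (merge (t+1) (upd p t (σ t 0)) (sig' t m d σ τ) g)))
            (Φ (VV m W (merge (t+1) (upd q t (σ t 1)) (sig' t m d σ τ) g)))
            ≤ Real.sqrt ((t:ℝ)+1) * b)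
        ∧ (c = false → dist (Φ (VV m W (merge (t+1) (upd p t (σ t 1)) (sig' t m d σ τ) g)))
            (Φ (VV m W (merge (t+1) (upd q t (σ t 0)) (sig' t m d σ τ) g)))
            ≤ Real.sqrt ((t:ℝ)+1) * b) := by
      intro g hg
      set ℓ : ℕ → ℕ := liftg t m (extendF d (fun j => τ j (g (t+1+(j:ℕ))))) with hℓ
      have hℓval : ∀ i (h1 : t+1 ≤ i) (h2 : i < m),
          ℓ i = τ ⟨i - (t+1), by omega⟩ (g i) := by
        intro i h1 h2
        rw [hℓ]
        unfold liftg extendF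
        rw [if_pos (show t+1 ≤ i ∧ i < m from ⟨h1, h2⟩),
          dif_pos (show i - (t+1) < d by omega)]
        show τ ⟨i-(t+1), by omega⟩ (g (t+1+(i-(t+1)))) = τ ⟨i-(t+1), by omega⟩ (g i)
        have h5 : t + 1 + (i - (t+1)) = i := by omega
        rw [h5]
      have hℓR : ∀ i, t+1 ≤ i → i < m → ℓ i < max RG 2 := by
        intro i h1 h2
        rw [hℓval i h1 h2]
        exact lt_of_lt_of_le (hτ1 _ _ (hg i h1 h2)) (le_max_left _ _)
      -- bounds for the four assignments
      have hbnd : ∀ s, s < max RG 2 → ∀ i, t ≤ i → i < m → (upd ℓ t s) i < max RG 2 := by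
        intro s hs i h1 h2
        unfold upd
        by_cases h : i = t
        · rw [if_pos h]; exact hs
        · rw [if_neg h]; exact hℓR i (by omega) h2
      have hmw : ∀ (f : ℕ → ℕ), (∀ i, i < t → f i < W) → ∀ s, s < max RG 2 →
          ∀ i, i < m → merge t f σ (upd ℓ t s) i < W := by
        intro f hf s hs
        exact merge_lt hf (fun i h1 h2 => hσ1 i h1 h2 _ (hbnd s hs i h1 h2))
      have hP0W := hmw p hp 0 h0R
      have hP1W := hmw p hp 1 h1R
      have hQ0W := hmw q hq 0 h0R
      have hQ1W := hmw q hq 1 h1R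
      -- swap lemmas
      have hswap : ∀ (f : ℕ → ℕ), (∀ i, i < t → f i < W) →
          hammingDist (VV m W (merge t f σ (upd ℓ t 0))) (VV m W (merge t f σ (upd ℓ t 1))) = 2 := by
        intro f hf
        apply hamming_VV_swap (hmw f hf 0 h0R) (hmw f hf 1 h1R) htm
        · unfold merge upd
          rw [if_neg (lt_irrefl t), if_neg (lt_irrefl t), if_pos rfl, if_pos rfl]
          exact hαβ
        · intro i hi hit
          unfold merge upd
          by_cases h : i < t
          · rw [if_pos h, if_pos h]
          · rw [if_neg h, if_neg h, if_neg hit, if_neg hit]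
      have hdistP : dist (Φ (VV m W (merge t p σ (upd ℓ t 0))))
          (Φ (VV m W (merge t p σ (upd ℓ t 1)))) ≤ b :=
        hΦ _ (VV_mem_Snm hP0W) _ (VV_mem_Snm hP1W) (hswap p hp)
      have hdistQ : dist (Φ (VV m W (merge t q σ (upd ℓ t 0))))
          (Φ (VV m W (merge t q σ (upd ℓ t 1)))) ≤ b :=
        hΦ _ (VV_mem_Snm hQ0W) _ (VV_mem_Snm hQ1W) (hswap q hq)
      have hg0 : dist (Φ (VV m W (merge t p σ (upd ℓ t 0))))
          (Φ (VV m W (merge t q σ (upd ℓ t 0)))) ≤ Real.sqrt t * b :=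
        hgood (upd ℓ t 0) (hbnd 0 h0R)
      have hg1 : dist (Φ (VV m W (merge t p σ (upd ℓ t 1))))
          (Φ (VV m W (merge t q σ (upd ℓ t 1)))) ≤ Real.sqrt t * b :=
        hgood (upd ℓ t 1) (hbnd 1 h1R)
      -- Ptolemy
      have hptol := hpt (Φ (VV m W (merge t p σ (upd ℓ t 0))))
        (Φ (VV m W (merge t p σ (upd ℓ t 1))))
        (Φ (VV m W (merge t q σ (upd ℓ t 1))))
        (Φ (VV m W (merge t q σ (upd ℓ t 0))))
      have hprod : dist (Φ (VV m W (merge t p σ (upd ℓ t 0))))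
            (Φ (VV m W (merge t q σ (upd ℓ t 1))))
          * dist (Φ (VV m W (merge t p σ (upd ℓ t 1))))
            (Φ (VV m W (merge t q σ (upd ℓ t 0))))
          ≤ (Real.sqrt ((t:ℝ)+1) * b) * (Real.sqrt ((t:ℝ)+1) * b) := by
        have hb1 : dist (Φ (VV m W (merge t q σ (upd ℓ t 1))))
            (Φ (VV m W (merge t q σ (upd ℓ t 0)))) ≤ b := by
          rw [dist_comm]; exact hdistQ
        have hb2 : dist (Φ (VV m W (merge t q σ (upd ℓ t 0))))
            (Φ (VV m W (merge t p σ (upd ℓ t 0)))) ≤ Real.sqrt t * b := by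
          rw [dist_comm]; exact hg0
        have e1 : Real.sqrt (t:ℝ) * Real.sqrt (t:ℝ) = (t:ℝ) :=
          Real.mul_self_sqrt (by positivity)
        have e2 : Real.sqrt ((t:ℝ)+1) * Real.sqrt ((t:ℝ)+1) = (t:ℝ)+1 :=
          Real.mul_self_sqrt (by positivity)
        have hr1 : dist (Φ (VV m W (merge t p σ (upd ℓ t 0))))
              (Φ (VV m W (merge t p σ (upd ℓ t 1))))
            * dist (Φ (VV m W (merge t q σ (upd ℓ t 1))))
              (Φ (VV m W (merge t q σ (upd ℓ t 0)))) ≤ b * b :=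
          mul_le_mul hdistP hb1 dist_nonneg (le_trans dist_nonneg hdistP)
        have hr2 : dist (Φ (VV m W (merge t p σ (upd ℓ t 1))))
              (Φ (VV m W (merge t q σ (upd ℓ t 1))))
            * dist (Φ (VV m W (merge t q σ (upd ℓ t 0))))
              (Φ (VV m W (merge t p σ (upd ℓ t 0)))) ≤ (Real.sqrt t * b) * (Real.sqrt t * b) :=
          mul_le_mul hg1 hb2 dist_nonneg (le_trans dist_nonneg hg1)
        nlinarith [hptol, hr1, hr2]
      -- read off the color
      have hoc : (if dist (Φ (VV m W (merge t p σ (upd ℓ t 0))))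
              (Φ (VV m W (merge t q σ (upd ℓ t 1)))) ≤ Real.sqrt ((t:ℝ)+1) * b
          then true else false) = c := by
        have hz : ∀ j : Fin d, g (t+1+(j:ℕ)) < R1 := by
          intro j
          exact hg _ (by omega) (by have := j.isLt; omega)
        exact hτ3 (fun j => g (t+1+(j:ℕ))) hz
      -- translation equalities
      have eP0 : VV m W (merge t p σ (upd ℓ t 0))
          = VV m W (merge (t+1) (upd p t (σ t 0)) (sig' t m d σ τ) g) :=
        VV_congr (merge_eq htm1 p σ τ 0 g)
      have eP1 : VV m W (merge t p σ (upd ℓ t 1))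
          = VV m W (merge (t+1) (upd p t (σ t 1)) (sig' t m d σ τ) g) :=
        VV_congr (merge_eq htm1 p σ τ 1 g)
      have eQ0 : VV m W (merge t q σ (upd ℓ t 0))
          = VV m W (merge (t+1) (upd q t (σ t 0)) (sig' t m d σ τ) g) :=
        VV_congr (merge_eq htm1 q σ τ 0 g)
      have eQ1 : VV m W (merge t q σ (upd ℓ t 1))
          = VV m W (merge (t+1) (upd q t (σ t 1)) (sig' t m d σ τ) g) :=
        VV_congr (merge_eq htm1 q σ τ 1 g)
      by_cases hX : dist (Φ (VV m W (merge t p σ (upd ℓ t 0))))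
          (Φ (VV m W (merge t q σ (upd ℓ t 1)))) ≤ Real.sqrt ((t:ℝ)+1) * b
      · rw [if_pos hX] at hoc
        constructor
        · intro _
          rw [← eP0, ← eQ1]
          exact hX
        · intro hc
          rw [← hoc] at hc
          exact absurd hc (by decide)
      · rw [if_neg hX] at hoc
        constructor
        · intro hc
          rw [← hoc] at hc
          exact absurd hc (by decide)
        · intro _
          rw [← eP1, ← eQ0]
          have h1 : (Real.sqrt ((t:ℝ)+1) * b) * dist (Φ (VV m W (merge t p σ (upd ℓ t 1))))
              (Φ (VV m W (merge t q σ (upd ℓ t 0))))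
              ≤ dist (Φ (VV m W (merge t p σ (upd ℓ t 0))))
                (Φ (VV m W (merge t q σ (upd ℓ t 1))))
              * dist (Φ (VV m W (merge t p σ (upd ℓ t 1))))
                (Φ (VV m W (merge t q σ (upd ℓ t 0)))) :=
            mul_le_mul_of_nonneg_right (le_of_lt (lt_of_not_ge hX)) dist_nonneg
          have h2 := le_trans h1 hprod
          exact le_of_mul_le_mul_left h2 hsbpos
    -- apply the induction hypothesis, in the orientation given by the color
    have hcast : Real.sqrt (((t+1:ℕ)):ℝ) = Real.sqrt ((t:ℝ)+1) := by
      congr 1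
      push_cast
      ring
    have happly : ∀ γ δ : ℕ, γ < W → δ < W → γ ≠ δ →
        (∀ g : ℕ → ℕ, (∀ i, t+1 ≤ i → i < m → g i < R1) →
          dist (Φ (VV m W (merge (t+1) (upd p t γ) (sig' t m d σ τ) g)))
            (Φ (VV m W (merge (t+1) (upd q t δ) (sig' t m d σ τ) g)))
            ≤ Real.sqrt ((t:ℝ)+1) * b) →
        ∃ p' q' : ℕ → ℕ, (∀ i, i < m → p' i < W) ∧ (∀ i, i < m → q' i < W) ∧
          (∀ i, i < m → p' i ≠ q' i) ∧
          dist (Φ (VV m W p')) (Φ (VV m W q')) ≤ Real.sqrt m * b := by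
      intro γ δ hγ hδ hne hgood'
      apply hprop W Y hpt b hb Φ hΦ (t+1) (by omega) (upd p t γ) (upd q t δ)
        (sig' t m d σ τ)
      · intro i hi
        unfold upd
        by_cases h : i = t
        · rw [if_pos h]; exact hγ
        · rw [if_neg h]; exact hp i (by omega)
      · intro i hi
        unfold upd
        by_cases h : i = t
        · rw [if_pos h]; exact hδ
        · rw [if_neg h]; exact hq i (by omega)
      · intro i hi
        unfold upd
        by_cases h : i = t
        · rw [if_pos h, if_pos h]; exact hne
        · rw [if_neg h, if_neg h]; exact hpq i (by omega)
      · intro i h1 h2 s hs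
        unfold sig'
        rw [if_pos ⟨h1, h2⟩]
        apply hσ1 i (by omega) h2
        unfold extendF
        rw [dif_pos (show i - (t+1) < d by omega)]
        exact lt_of_lt_of_le (hτ1 _ _ hs) (le_max_left _ _)
      · intro i h1 h2 s1 s2 h12 hs2
        unfold sig'
        rw [if_pos (show t+1 ≤ i ∧ i < m from ⟨h1, h2⟩),
          if_pos (show t+1 ≤ i ∧ i < m from ⟨h1, h2⟩)]
        apply hσ2 i (by omega) h2
        · unfold extendF
          rw [dif_pos (show i - (t+1) < d by omega), dif_pos (show i - (t+1) < d by omega)]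
          exact hτ2 _ _ _ h12 hs2
        · unfold extendF
          rw [dif_pos (show i - (t+1) < d by omega)]
          exact lt_of_lt_of_le (hτ1 _ _ hs2) (le_max_left _ _)
      · intro g hg
        rw [hcast]
        exact hgood' g hg
    by_cases hc : c = true
    · exact happly (σ t 0) (σ t 1) hαW hβW hαβ (fun g hg => (main g hg).1 hc)
    · exact happly (σ t 1) (σ t 0) hβW hαW (Ne.symm hαβ)
        (fun g hg => (main g hg).2 (by revert hc; cases c <;> simp))

lemma sum_single_eq_VV {m W : ℕ} {f : ℕ → ℕ} (hf : ∀ i, i < m → f i < W)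
    (e : Fin m → Fin (m*W)) (he : ∀ i : Fin m, (e i : ℕ) = (i:ℕ)*W + f i) :
    (∑ i : Fin m, Pi.single (e i) (1:ℕ)) = VV m W f := by
  classical
  funext x
  rw [Finset.sum_apply]
  simp only [Pi.single_apply]
  by_cases hx : ∃ i, i < m ∧ (x:ℕ) = i*W + f i
  · obtain ⟨i0, hi0, hxi⟩ := hx
    have hVV : VV m W f x = 1 := (VV_eq_one_iff f x).mpr ⟨i0, hi0, hxi⟩
    rw [hVV]
    rw [Finset.sum_eq_single (⟨i0, hi0⟩ : Fin m)]
    · rw [if_pos]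
      apply Fin.ext
      rw [he ⟨i0, hi0⟩, hxi]
    · intro j _ hj
      rw [if_neg]
      intro hxe
      apply hj
      have : (x:ℕ) = (j:ℕ)*W + f j := by rw [hxe, he j]
      rw [hxi] at this
      have h2 := site_inj (hf i0 hi0) (hf j j.isLt) this
      apply Fin.ext
      exact h2.1.symm
    · intro h; exact absurd (Finset.mem_univ _) h
  · have hVV : VV m W f x = 0 := by
      unfold VV
      rw [if_neg hx]
    rw [hVV]
    apply Finset.sum_eq_zero
    intro j _
    rw [if_neg]
    intro hxe
    exact hx ⟨j, j.isLt, by rw [hxe, he j]⟩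

/-- The cube theorem: for every `m ≥ 1` there is `n ≥ 2m` such that for every metric
space `Y` satisfying the Ptolemy inequality and every map `Φ : S_{n,m} → Y` whose values
on pairs at Hamming distance `2` are `b`-close, some embedded `m`-cube `Φ ∘ φ_{k₁⋯k_{2m}}`
has a diagonal of length at most `√m · b`. -/
theorem cube_theorem (m : ℕ) (hm : 1 ≤ m) :
    ∃ n : ℕ, 2 * m ≤ n ∧
      ∀ (Y : Type*) [MetricSpace Y],
        (∀ y₁ y₂ y₃ y₄ : Y,
          dist y₁ y₃ * dist y₂ y₄ ≤ dist y₁ y₂ * dist y₃ y₄ + dist y₂ y₃ * dist y₄ y₁) →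
        ∀ b : ℝ, 0 < b → ∀ Φ : (Fin n → ℕ) → Y,
          (∀ I ∈ Snm n m, ∀ J ∈ Snm n m, hammingDist I J = 2 → dist (Φ I) (Φ J) ≤ b) →
          ∃ k : Fin (2 * m) → Fin n, StrictMono k ∧
            ∃ a : Fin m → Bool,
              dist (Φ (cubeMap k a)) (Φ (cubeMap k fun i => !(a i))) ≤
                Real.sqrt m * b := by
  classical
  obtain ⟨R, hR2, hprop⟩ := masterLemma m m (le_refl m)
  refine ⟨m * R, ?_, ?_⟩
  · calc 2 * m = m * 2 := by ring
    _ ≤ m * R := Nat.mul_le_mul_left m hR2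
  intro Y _ hpt b hb Φ hΦ
  have key := hprop R Y hpt b hb Φ hΦ 0 (by omega) (fun _ => 0) (fun _ => 0)
    (fun _ s => s) (by intro i hi; omega) (by intro i hi; omega) (by intro i hi; omega)
    (by intro i _ _ s hs; exact hs) (by intro i _ _ s1 s2 h12 _; exact h12) ?_
  · obtain ⟨p', q', hp', hq', hne', hdist⟩ := key
    -- construct the cube
    have hsite : ∀ j : Fin (2*m),
        ((j:ℕ)/2)*R + (if (j:ℕ) % 2 = 0 then min (p' ((j:ℕ)/2)) (q' ((j:ℕ)/2))
          else max (p' ((j:ℕ)/2)) (q' ((j:ℕ)/2))) < m * R := by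
      intro j
      have hj2 : (j:ℕ)/2 < m := by have := j.isLt; omega
      apply site_lt hj2
      split
      · exact lt_of_le_of_lt (min_le_left _ _) (hp' _ hj2)
      · exact max_lt (hp' _ hj2) (hq' _ hj2)
    set k : Fin (2*m) → Fin (m*R) := fun j =>
      ⟨((j:ℕ)/2)*R + (if (j:ℕ) % 2 = 0 then min (p' ((j:ℕ)/2)) (q' ((j:ℕ)/2))
          else max (p' ((j:ℕ)/2)) (q' ((j:ℕ)/2))), hsite j⟩ with hk
    have hkmono : StrictMono k := by
      intro j1 j2 hj
      have hjj : (j1:ℕ) < (j2:ℕ) := hj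
      show (k j1 : ℕ) < (k j2 : ℕ)
      rw [hk]
      simp only
      by_cases hdiv : (j1:ℕ)/2 = (j2:ℕ)/2
      · have h1 : (j1:ℕ) % 2 = 0 := by omega
        have h2 : (j2:ℕ) % 2 = 1 := by omega
        rw [hdiv, if_pos h1, if_neg (by omega : ¬ (j2:ℕ) % 2 = 0)]
        apply Nat.add_lt_add_left
        exact min_lt_max.mpr (hne' _ (by have := j2.isLt; omega))
      · have hlt : (j1:ℕ)/2 < (j2:ℕ)/2 := by omega
        have hj1m : (j1:ℕ)/2 < m := by have := j1.isLt; omega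
        have hj2m : (j2:ℕ)/2 < m := by have := j2.isLt; omega
        have hb1 : (if (j1:ℕ) % 2 = 0 then min (p' ((j1:ℕ)/2)) (q' ((j1:ℕ)/2))
            else max (p' ((j1:ℕ)/2)) (q' ((j1:ℕ)/2))) < R := by
          split
          · exact lt_of_le_of_lt (min_le_left _ _) (hp' _ hj1m)
          · exact max_lt (hp' _ hj1m) (hq' _ hj1m)
        calc ((j1:ℕ)/2)*R + _ < ((j1:ℕ)/2)*R + R := Nat.add_lt_add_left hb1 _
        _ = ((j1:ℕ)/2 + 1)*R := by ring
        _ ≤ ((j2:ℕ)/2)*R := Nat.mul_le_mul_right _ (by omega)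
        _ ≤ ((j2:ℕ)/2)*R + _ := Nat.le_add_right _ _
    set a : Fin m → Bool := fun i => decide (q' i < p' i) with ha
    have hcubeA : cubeMap k a = VV m R p' := by
      unfold cubeMap
      apply sum_single_eq_VV hp'
      intro i
      by_cases hai : a i
      · rw [if_pos hai, hk]
        simp only
        have h1 : (2*(i:ℕ)+1)/2 = (i:ℕ) := by omega
        have h2 : ¬ (2*(i:ℕ)+1) % 2 = 0 := by omega
        rw [h1, if_neg h2]
        have : q' (i:ℕ) < p' (i:ℕ) := by
          rw [ha] at hai
          exact of_decide_eq_true hai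
        rw [Nat.max_eq_left (le_of_lt this)]
      · rw [if_neg hai, hk]
        simp only
        have h1 : (2*(i:ℕ))/2 = (i:ℕ) := by omega
        have h2 : (2*(i:ℕ)) % 2 = 0 := by omega
        rw [h1, if_pos h2]
        have hnlt : ¬ q' (i:ℕ) < p' (i:ℕ) := by
          rw [ha] at hai
          simpa using hai
        have : p' (i:ℕ) < q' (i:ℕ) := by
          have := hne' (i:ℕ) i.isLt
          omega
        rw [Nat.min_eq_left (le_of_lt this)]
    have hcubeB : cubeMap k (fun i => !(a i)) = VV m R q' := by
      unfold cubeMap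
      apply sum_single_eq_VV hq'
      intro i
      by_cases hai : a i
      · have hba : ¬ (!(a i)) = true := by simp [hai]
        rw [if_neg hba, hk]
        simp only
        have h1 : (2*(i:ℕ))/2 = (i:ℕ) := by omega
        have h2 : (2*(i:ℕ)) % 2 = 0 := by omega
        rw [h1, if_pos h2]
        have : q' (i:ℕ) < p' (i:ℕ) := by
          rw [ha] at hai
          exact of_decide_eq_true hai
        rw [Nat.min_eq_right (le_of_lt this)]
      · have hba : (!(a i)) = true := by simp [hai]
        rw [if_pos hba, hk]
        simp only
        have h1 : (2*(i:ℕ)+1)/2 = (i:ℕ) := by omega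
        have h2 : ¬ (2*(i:ℕ)+1) % 2 = 0 := by omega
        rw [h1, if_neg h2]
        have : p' (i:ℕ) < q' (i:ℕ) := by
          rw [ha] at hai
          have h3 := hne' (i:ℕ) i.isLt
          have h4 : ¬ q' (i:ℕ) < p' (i:ℕ) := by simpa using hai
          omega
        rw [Nat.max_eq_right (le_of_lt this)]
    exact ⟨k, hkmono, a, by rw [hcubeA, hcubeB]; exact hdist⟩
  · intro g hg
    have : merge 0 (fun _ => 0) (fun _ s => s) g = merge 0 (fun _ => 0) (fun _ s => s) g := rfl
    rw [dist_self]
    have : Real.sqrt ((0:ℕ):ℝ) * b = 0 := by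
      simp
    rw [this]
end

section
/- Let Z be the closed unit ball of ℓ¹ (the space of real sequences z = (z₁,z₂,…) with Σ|zᵢ| ≤ 1), equipped with the metric induced by the ℓ¹-norm. Let Y be any metric space satisfying the Ptolemy inequality and let q > 1/2. Then there is no q-snowflake map f : Z → Y; that is, there exist no c ≥ 1 and f : Z → Y such that (1/c)·‖z−z'‖₁^q ≤ dist(f(z),f(z')) ≤ c·‖z−z'‖₁^q for all z, z' ∈ Z. -/
open scoped ENNReal

private lemma key4 {Y : Type*} [MetricSpace Y]
    (hPt : ∀ y₁ y₂ y₃ y₄ : Y,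
      dist y₁ y₃ * dist y₂ y₄ ≤ dist y₁ y₂ * dist y₃ y₄ + dist y₂ y₃ * dist y₄ y₁)
    (y₁ y₂ y₃ y₄ : Y) :
    dist y₁ y₃ ^ 2 + dist y₂ y₄ ^ 2 ≤
      3 * dist y₁ y₂ ^ 2 + 3 * dist y₃ y₄ ^ 2 + dist y₂ y₃ ^ 2 + dist y₄ y₁ ^ 2 := by
  have h := hPt y₁ y₂ y₃ y₄
  have a1 := dist_triangle y₁ y₂ y₃
  have a2 := dist_triangle y₂ y₄ y₃
  have a3 := dist_triangle y₂ y₁ y₃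
  have a4 := dist_triangle y₂ y₃ y₄
  have c1 : dist y₄ y₃ = dist y₃ y₄ := dist_comm _ _
  have c2 : dist y₂ y₁ = dist y₁ y₂ := dist_comm _ _
  have c3 : dist y₄ y₁ = dist y₁ y₄ := dist_comm _ _
  have t1 : dist y₁ y₃ - dist y₂ y₄ ≤ dist y₁ y₂ + dist y₃ y₄ := by linarith
  have t2 : dist y₂ y₄ - dist y₁ y₃ ≤ dist y₁ y₂ + dist y₃ y₄ := by linarith
  have hsq : (dist y₁ y₃ - dist y₂ y₄) ^ 2 ≤ (dist y₁ y₂ + dist y₃ y₄) ^ 2 :=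
    sq_le_sq' (by linarith) t1
  nlinarith [hsq, h, sq_nonneg (dist y₁ y₂ - dist y₃ y₄), sq_nonneg (dist y₂ y₃ - dist y₄ y₁)]

private lemma enflo {Y : Type*} [MetricSpace Y]
    (key4 : ∀ y₁ y₂ y₃ y₄ : Y,
      dist y₁ y₃ ^ 2 + dist y₂ y₄ ^ 2 ≤
      3 * dist y₁ y₂ ^ 2 + 3 * dist y₃ y₄ ^ 2 + dist y₂ y₃ ^ 2 + dist y₄ y₁ ^ 2) :
    ∀ (n : ℕ) (g : (Fin n → Bool) → Y),
      ∑ x : Fin n → Bool, dist (g x) (g (fun i => !x i)) ^ 2 ≤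
        3 * ∑ x : Fin n → Bool, ∑ j, dist (g x) (g (Function.update x j (!x j))) ^ 2 := by
  intro n
  induction n with
  | zero =>
    intro g
    have hx : ∀ x : Fin 0 → Bool, (fun i => !x i) = x := fun x => funext fun i => i.elim0
    simp [hx]
  | succ n ih =>
    intro g
    classical
    -- reindexing over cons
    have hre : ∀ F : (Fin (n+1) → Bool) → ℝ,
        ∑ x, F x = (∑ u : Fin n → Bool, F (Fin.cons false u))
          + (∑ u : Fin n → Bool, F (Fin.cons true u)) := by
      intro F
      rw [← Equiv.sum_comp (Fin.consEquiv (fun _ => Bool)) F, Fintype.sum_prod_type,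
        Fintype.sum_bool]
      simp only [Fin.consEquiv, Equiv.coe_fn_mk]
      ring
    have hinv : ∀ G : (Fin n → Bool) → ℝ,
        ∑ u : Fin n → Bool, G (fun i => !u i) = ∑ u : Fin n → Bool, G u := by
      intro G
      refine Fintype.sum_bijective (fun u => fun i => !u i)
        (Function.Involutive.bijective fun u => funext fun i => Bool.not_not (u i)) _ _
        (fun u => rfl)
    have hneg : ∀ (b : Bool) (u : Fin n → Bool),
        (fun i => !(Fin.cons b u : Fin (n+1) → Bool) i)
          = (Fin.cons (!b) (fun i => !u i) : Fin (n+1) → Bool) := by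
      intro b u
      funext i
      induction i using Fin.cases <;> simp
    -- pointwise key inequality
    have hb : ∀ u : Fin n → Bool,
        dist (g (Fin.cons false u)) (g (fun i => !(Fin.cons false u : Fin (n+1) → Bool) i)) ^ 2
        + dist (g (Fin.cons true u)) (g (fun i => !(Fin.cons true u : Fin (n+1) → Bool) i)) ^ 2
        ≤ 3 * dist (g (Fin.cons false u)) (g (Fin.cons true u)) ^ 2
          + 3 * dist (g (Fin.cons false (fun i => !u i))) (g (Fin.cons true (fun i => !u i))) ^ 2
          + dist (g (Fin.cons true u)) (g (Fin.cons true (fun i => !u i))) ^ 2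
          + dist (g (Fin.cons false u)) (g (Fin.cons false (fun i => !u i))) ^ 2 := by
      intro u
      rw [hneg false u, hneg true u]
      simp only [Bool.not_false, Bool.not_true]
      have h := key4 (g (Fin.cons false u)) (g (Fin.cons true u))
        (g (Fin.cons true (fun i => !u i))) (g (Fin.cons false (fun i => !u i)))
      rw [dist_comm (g (Fin.cons true (fun i => !u i))) (g (Fin.cons false (fun i => !u i))),
        dist_comm (g (Fin.cons false (fun i => !u i))) (g (Fin.cons false u))] at h
      exact h
    have hL : ∑ x : Fin (n+1) → Bool, dist (g x) (g (fun i => !x i)) ^ 2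
        ≤ 6 * (∑ u : Fin n → Bool, dist (g (Fin.cons false u)) (g (Fin.cons true u)) ^ 2)
          + (∑ u : Fin n → Bool,
              dist (g (Fin.cons true u)) (g (Fin.cons true (fun i => !u i))) ^ 2)
          + (∑ u : Fin n → Bool,
              dist (g (Fin.cons false u)) (g (Fin.cons false (fun i => !u i))) ^ 2) := by
      rw [hre (fun x => dist (g x) (g (fun i => !x i)) ^ 2), ← Finset.sum_add_distrib]
      calc ∑ u : Fin n → Bool,
            (dist (g (Fin.cons false u)) (g (fun i => !(Fin.cons false u : Fin (n+1) → Bool) i)) ^ 2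
            + dist (g (Fin.cons true u)) (g (fun i => !(Fin.cons true u : Fin (n+1) → Bool) i)) ^ 2)
          ≤ ∑ u : Fin n → Bool,
            (3 * dist (g (Fin.cons false u)) (g (Fin.cons true u)) ^ 2
            + 3 * dist (g (Fin.cons false (fun i => !u i))) (g (Fin.cons true (fun i => !u i))) ^ 2
            + dist (g (Fin.cons true u)) (g (Fin.cons true (fun i => !u i))) ^ 2
            + dist (g (Fin.cons false u)) (g (Fin.cons false (fun i => !u i))) ^ 2) :=
          Finset.sum_le_sum (fun u _ => hb u)
        _ = _ := by
          simp only [Finset.sum_add_distrib, ← Finset.mul_sum]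
          rw [hinv (fun u => dist (g (Fin.cons false u)) (g (Fin.cons true u)) ^ 2)]
          ring
    have hAF : (∑ u : Fin n → Bool,
          dist (g (Fin.cons false u)) (g (Fin.cons false (fun i => !u i))) ^ 2)
        ≤ 3 * ∑ u : Fin n → Bool, ∑ j : Fin n,
          dist (g (Fin.cons false u)) (g (Fin.cons false (Function.update u j (!u j)))) ^ 2 :=
      ih (fun u => g (Fin.cons false u))
    have hAT : (∑ u : Fin n → Bool,
          dist (g (Fin.cons true u)) (g (Fin.cons true (fun i => !u i))) ^ 2)
        ≤ 3 * ∑ u : Fin n → Bool, ∑ j : Fin n,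
          dist (g (Fin.cons true u)) (g (Fin.cons true (Function.update u j (!u j)))) ^ 2 :=
      ih (fun u => g (Fin.cons true u))
    have h0 : ∀ (b : Bool) (u : Fin n → Bool),
        (∑ j : Fin (n+1), dist (g (Fin.cons b u))
            (g (Function.update (Fin.cons b u) j (!(Fin.cons b u : Fin (n+1) → Bool) j))) ^ 2)
        = dist (g (Fin.cons false u)) (g (Fin.cons true u)) ^ 2
          + ∑ j : Fin n, dist (g (Fin.cons b u))
              (g (Fin.cons b (Function.update u j (!u j)))) ^ 2 := by
      intro b u
      rw [Fin.sum_univ_succ]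
      congr 1
      · rw [Fin.cons_zero, Fin.update_cons_zero]
        cases b
        · simp
        · simp only [Bool.not_true]
          rw [dist_comm]
      · refine Finset.sum_congr rfl fun j _ => ?_
        rw [Fin.cons_succ, ← Fin.cons_update]
    have hR : (∑ x : Fin (n+1) → Bool, ∑ j, dist (g x) (g (Function.update x j (!x j))) ^ 2)
        = 2 * (∑ u : Fin n → Bool, dist (g (Fin.cons false u)) (g (Fin.cons true u)) ^ 2)
          + (∑ u : Fin n → Bool, ∑ j : Fin n,
              dist (g (Fin.cons false u)) (g (Fin.cons false (Function.update u j (!u j)))) ^ 2)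
          + (∑ u : Fin n → Bool, ∑ j : Fin n,
              dist (g (Fin.cons true u)) (g (Fin.cons true (Function.update u j (!u j)))) ^ 2) := by
      rw [hre (fun x => ∑ j, dist (g x) (g (Function.update x j (!x j))) ^ 2)]
      simp only [h0]
      rw [Finset.sum_add_distrib, Finset.sum_add_distrib]
      ring
    rw [hR]
    linarith [hL, hAF, hAT]

section pts
variable (n : ℕ)

private noncomputable def acoef (n : ℕ) (x : Fin n → Bool) (i : ℕ) : ℝ :=
  if h : i < n then (if x ⟨i, h⟩ then (n : ℝ)⁻¹ else 0) else 0

private noncomputable def zpt (n : ℕ) (x : Fin n → Bool) : lp (fun _ : ℕ => ℝ) 1 :=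
  ∑ i ∈ Finset.range n, lp.single 1 i (acoef n x i)

private lemma hnorm_gen (b : ℕ → ℝ) :
    ‖(∑ i ∈ Finset.range n, lp.single 1 i (b i) : lp (fun _ : ℕ => ℝ) 1)‖
      = ∑ i ∈ Finset.range n, |b i| := by
  have := lp.norm_sum_single (p := (1:ℝ≥0∞)) (by simp) b (Finset.range n)
  simpa using this

private lemma single_sub (i : ℕ) (r s : ℝ) :
    lp.single (E := fun _ : ℕ => ℝ) 1 i r - lp.single 1 i s = lp.single 1 i (r - s) := by
  apply lp.ext
  rw [lp.coeFn_sub]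
  funext j
  by_cases h : j = i
  · subst h; simp [lp.single_apply]
  · simp [lp.single_apply, h]

private lemma zpt_sub (x y : Fin n → Bool) :
    zpt n x - zpt n y = ∑ i ∈ Finset.range n, lp.single 1 i (acoef n x i - acoef n y i) := by
  rw [zpt, zpt, ← Finset.sum_sub_distrib]
  exact Finset.sum_congr rfl fun i _ => single_sub i _ _

private lemma zpt_dist (x y : Fin n → Bool) :
    ‖zpt n x - zpt n y‖ = ∑ i ∈ Finset.range n, |acoef n x i - acoef n y i| := by
  rw [zpt_sub, hnorm_gen]

private lemma zpt_ball (x : Fin n → Bool) : ‖zpt n x‖ ≤ 1 := by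
  rw [zpt, hnorm_gen]
  calc ∑ i ∈ Finset.range n, |acoef n x i| ≤ ∑ i ∈ Finset.range n, (n : ℝ)⁻¹ := by
        refine Finset.sum_le_sum fun i hi => ?_
        rw [acoef]
        rcases lt_or_ge i n with h | h
        · rw [dif_pos h]
          rcases x ⟨i, h⟩ <;> simp [abs_of_nonneg]
        · rw [dif_neg (not_lt.mpr h)]; simp
    _ ≤ 1 := by
        rw [Finset.sum_const, Finset.card_range, nsmul_eq_mul]
        rcases Nat.eq_zero_or_pos n with h | h
        · simp [h]
        · rw [mul_inv_cancel₀ (by positivity)]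

private lemma zpt_diag (hn : 0 < n) (x : Fin n → Bool) :
    ‖zpt n x - zpt n (fun i => !x i)‖ = 1 := by
  rw [zpt_dist]
  have h1 : ∀ i ∈ Finset.range n, |acoef n x i - acoef n (fun k => !x k) i| = (n : ℝ)⁻¹ := by
    intro i hi
    have h : i < n := Finset.mem_range.mp hi
    rw [acoef, acoef, dif_pos h, dif_pos h]
    rcases hx : x ⟨i, h⟩ <;>
      simp [hx, abs_of_nonneg]
  rw [Finset.sum_congr rfl h1, Finset.sum_const, Finset.card_range, nsmul_eq_mul,
    mul_inv_cancel₀ (by positivity)]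

private lemma zpt_edge (x : Fin n → Bool) (j : Fin n) :
    ‖zpt n x - zpt n (Function.update x j (!x j))‖ = (n : ℝ)⁻¹ := by
  rw [zpt_dist]
  have h1 : ∀ i ∈ Finset.range n,
      |acoef n x i - acoef n (Function.update x j (!x j)) i|
        = if i = (j : ℕ) then (n : ℝ)⁻¹ else 0 := by
    intro i hi
    have h : i < n := Finset.mem_range.mp hi
    rw [acoef, acoef, dif_pos h, dif_pos h]
    by_cases hij : i = (j : ℕ)
    · have : (⟨i, h⟩ : Fin n) = j := Fin.ext hij
      rw [this, Function.update_self, if_pos hij]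
      rcases hx : x j <;>
        simp [hx, abs_of_nonneg]
    · have : (⟨i, h⟩ : Fin n) ≠ j := fun hc => hij (by rw [← hc])
      rw [Function.update_of_ne this, if_neg hij]
      simp
  rw [Finset.sum_congr rfl h1, Finset.sum_ite_eq' (Finset.range n) (j : ℕ) fun _ => (n:ℝ)⁻¹,
    if_pos (Finset.mem_range.mpr j.isLt)]

end pts

/-- For `q > 1/2` there is no `q`-snowflake map from the closed unit ball of `ℓ¹`
into a metric space satisfying the Ptolemy inequality. -/
theorem no_snowflake_embedding_of_ptolemy {Y : Type*} [MetricSpace Y]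
    (hPt : ∀ y₁ y₂ y₃ y₄ : Y,
      dist y₁ y₃ * dist y₂ y₄ ≤ dist y₁ y₂ * dist y₃ y₄ + dist y₂ y₃ * dist y₄ y₁)
    (q : ℝ) (hq : 1 / 2 < q) :
    ¬ ∃ (c : ℝ) (f : lp (fun _ : ℕ => ℝ) 1 → Y), 1 ≤ c ∧
      ∀ z z' : lp (fun _ : ℕ => ℝ) 1, ‖z‖ ≤ 1 → ‖z'‖ ≤ 1 →
        (1 / c) * ‖z - z'‖ ^ q ≤ dist (f z) (f z') ∧
          dist (f z) (f z') ≤ c * ‖z - z'‖ ^ q := by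
  rintro ⟨c, f, hc, hf⟩
  have hc0 : (0:ℝ) < c := lt_of_lt_of_le one_pos hc
  have h2q : (0:ℝ) < 2 * q - 1 := by linarith
  obtain ⟨n, hn⟩ := exists_nat_gt (max 1 ((3 * c ^ 4) ^ ((2 * q - 1)⁻¹ : ℝ)))
  have hn1 : (1:ℝ) < n := lt_of_le_of_lt (le_max_left _ _) hn
  have hn0 : (0:ℝ) < (n:ℝ) := lt_trans one_pos hn1
  have hnpos : 0 < n := by exact_mod_cast hn0
  have h34 : (0:ℝ) ≤ 3 * c ^ 4 := by positivity
  have hbig : 3 * c ^ 4 < (n : ℝ) ^ (2 * q - 1) := by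
    calc 3 * c ^ 4 = ((3 * c ^ 4) ^ ((2*q-1)⁻¹ : ℝ)) ^ (2*q-1) :=
          (Real.rpow_inv_rpow h34 (ne_of_gt h2q)).symm
      _ < (n:ℝ) ^ (2*q-1) :=
          Real.rpow_lt_rpow (Real.rpow_nonneg h34 _)
            (lt_of_le_of_lt (le_max_right _ _) hn) h2q
  -- the embedded hypercube
  set g : (Fin n → Bool) → Y := fun x => f (zpt n x) with hg
  have key := enflo (key4 hPt) n g
  have hdiag : ∀ x : Fin n → Bool, (1/c) ^ 2 ≤ dist (g x) (g (fun i => !x i)) ^ 2 := by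
    intro x
    have h := (hf (zpt n x) (zpt n (fun i => !x i)) (zpt_ball n x) (zpt_ball n _)).1
    rw [zpt_diag n hnpos x, Real.one_rpow, mul_one] at h
    have h1c : (0:ℝ) ≤ 1 / c := by positivity
    exact pow_le_pow_left₀ h1c h 2
  have hedge : ∀ (x : Fin n → Bool) (j : Fin n),
      dist (g x) (g (Function.update x j (!x j))) ^ 2 ≤ (c * ((n:ℝ)⁻¹) ^ q) ^ 2 := by
    intro x j
    have h := (hf (zpt n x) (zpt n (Function.update x j (!x j)))
      (zpt_ball n x) (zpt_ball n _)).2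
    rw [zpt_edge n x j] at h
    exact pow_le_pow_left₀ dist_nonneg h 2
  have hcard : ((Finset.univ : Finset (Fin n → Bool)).card : ℝ) = 2 ^ n := by
    simp
  have hlow : (2:ℝ)^n * (1/c)^2
      ≤ ∑ x : Fin n → Bool, dist (g x) (g (fun i => !x i)) ^ 2 := by
    have h := Finset.card_nsmul_le_sum Finset.univ
      (fun x => dist (g x) (g (fun i => !x i)) ^ 2) ((1/c)^2) (fun x _ => hdiag x)
    rw [nsmul_eq_mul, hcard] at h
    exact h
  have hup : (∑ x : Fin n → Bool, ∑ j, dist (g x) (g (Function.update x j (!x j))) ^ 2)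
      ≤ (2:ℝ)^n * ((n:ℝ) * (c * ((n:ℝ)⁻¹) ^ q) ^ 2) := by
    have hx : ∀ x : Fin n → Bool,
        (∑ j, dist (g x) (g (Function.update x j (!x j))) ^ 2)
          ≤ (n:ℝ) * (c * ((n:ℝ)⁻¹) ^ q) ^ 2 := by
      intro x
      have h := Finset.sum_le_card_nsmul Finset.univ
        (fun j => dist (g x) (g (Function.update x j (!x j))) ^ 2)
        ((c * ((n:ℝ)⁻¹) ^ q) ^ 2) (fun j _ => hedge x j)
      rw [nsmul_eq_mul] at h
      simpa using h
    have h := Finset.sum_le_card_nsmul Finset.univ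
      (fun x => ∑ j, dist (g x) (g (Function.update x j (!x j))) ^ 2)
      ((n:ℝ) * (c * ((n:ℝ)⁻¹) ^ q) ^ 2) (fun x _ => hx x)
    rw [nsmul_eq_mul, hcard] at h
    exact h
  have hpow2 : (0:ℝ) < 2^n := by positivity
  have hmain : (2:ℝ)^n * ((1/c)^2)
      ≤ (2:ℝ)^n * (3 * ((n:ℝ) * (c * ((n:ℝ)⁻¹) ^ q) ^ 2)) := by
    calc (2:ℝ)^n * ((1/c)^2)
        ≤ ∑ x : Fin n → Bool, dist (g x) (g (fun i => !x i)) ^ 2 := hlow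
      _ ≤ 3 * ∑ x : Fin n → Bool, ∑ j, dist (g x) (g (Function.update x j (!x j))) ^ 2 := key
      _ ≤ 3 * ((2:ℝ)^n * ((n:ℝ) * (c * ((n:ℝ)⁻¹) ^ q) ^ 2)) := by linarith [hup]
      _ = (2:ℝ)^n * (3 * ((n:ℝ) * (c * ((n:ℝ)⁻¹) ^ q) ^ 2)) := by ring
  have h1 : (1/c)^2 ≤ 3 * ((n:ℝ) * (c * ((n:ℝ)⁻¹) ^ q) ^ 2) :=
    le_of_mul_le_mul_left hmain hpow2
  have hnq : (0:ℝ) < (n:ℝ) ^ q := Real.rpow_pos_of_pos hn0 q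
  have e1 : ((n:ℝ)⁻¹) ^ q = ((n:ℝ) ^ q)⁻¹ := Real.inv_rpow (le_of_lt hn0) q
  have e2 : ((n:ℝ) ^ q) ^ 2 = (n:ℝ) ^ (2*q-1) * (n:ℝ) := by
    rw [← Real.rpow_natCast ((n:ℝ) ^ q) 2, ← Real.rpow_mul (le_of_lt hn0),
      show q * ((2:ℕ):ℝ) = (2*q-1) + 1 by push_cast; ring,
      Real.rpow_add hn0, Real.rpow_one]
  rw [e1] at h1
  have h2 : (1:ℝ) ≤ 3 * (n:ℝ) * c^4 * (((n:ℝ) ^ q)⁻¹)^2 := by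
    have h3 := mul_le_mul_of_nonneg_left h1 (le_of_lt (by positivity : (0:ℝ) < c^2))
    calc (1:ℝ) = c^2 * ((1/c)^2) := by field_simp
      _ ≤ c^2 * (3 * ((n:ℝ) * (c * ((n:ℝ) ^ q)⁻¹) ^ 2)) := h3
      _ = 3 * (n:ℝ) * c^4 * (((n:ℝ) ^ q)⁻¹)^2 := by ring
  have h4 : 3 * (n:ℝ) * c^4 * (((n:ℝ) ^ q)⁻¹)^2 < 1 := by
    rw [inv_pow, e2]
    have hMn : (0:ℝ) < (n:ℝ) ^ (2*q-1) * (n:ℝ) :=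
      mul_pos (Real.rpow_pos_of_pos hn0 _) hn0
    rw [← div_eq_mul_inv, div_lt_one hMn]
    nlinarith [mul_lt_mul_of_pos_right hbig hn0]
  linarith [h2, h4]
end

section
/- Let Z be the closed unit ball of ℓ¹ (real sequences z with Σ|zᵢ| ≤ 1) with the ℓ¹-metric. Then there exist a constant c ≥ 1 and a map g : Z → ℓ² into the real Hilbert sequence space ℓ² such that (1/c)·‖z−z'‖₁ ≤ ‖g(z)−g(z')‖₂² ≤ c·‖z−z'‖₁ for all z, z' ∈ Z. In particular, g is a (1/2)-snowflake map of Z into a Hilbert space. -/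
open scoped ENNReal

/-- Component functions of the snowflake embedding: weighted sine/cosine oscillations. -/
noncomputable def sphi (t : ℝ) (p : ℕ × Bool) : ℝ :=
  (Real.sqrt 2⁻¹) ^ p.1 *
    (if p.2 then Real.cos (2 ^ p.1 * t) - 1 else Real.sin (2 ^ p.1 * t))

/-- The squared ℓ²-distance contributed by one real coordinate. -/
noncomputable def Dfun (x : ℝ) : ℝ :=
  ∑' k : ℕ, (2⁻¹ : ℝ) ^ k * (2 - 2 * Real.cos (2 ^ k * x))

lemma Dterm_nonneg (x : ℝ) (k : ℕ) :
    0 ≤ (2⁻¹ : ℝ) ^ k * (2 - 2 * Real.cos (2 ^ k * x)) :=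
  mul_nonneg (by positivity) (by nlinarith [Real.cos_le_one (2 ^ k * x)])

lemma Dterm_le (x : ℝ) (k : ℕ) :
    (2⁻¹ : ℝ) ^ k * (2 - 2 * Real.cos (2 ^ k * x)) ≤ (2⁻¹ : ℝ) ^ k * 4 :=
  mul_le_mul_of_nonneg_left (by nlinarith [Real.neg_one_le_cos (2 ^ k * x)])
    (by positivity)

lemma Dsummable (x : ℝ) :
    Summable (fun k : ℕ => (2⁻¹ : ℝ) ^ k * (2 - 2 * Real.cos (2 ^ k * x))) :=
  Summable.of_nonneg_of_le (Dterm_nonneg x) (Dterm_le x)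
    ((summable_geometric_of_lt_one (by norm_num) (by norm_num)).mul_right 4)

lemma Dfun_nonneg (x : ℝ) : 0 ≤ Dfun x :=
  tsum_nonneg (Dterm_nonneg x)

lemma Dfun_neg (x : ℝ) : Dfun (-x) = Dfun x := by
  unfold Dfun
  congr 1
  funext k
  rw [mul_neg, Real.cos_neg]

lemma Dfun_zero : Dfun 0 = 0 := by
  unfold Dfun
  simp

/-- Upper bound: `Dfun x ≤ 8 |x|`. -/
lemma Dfun_le (x : ℝ) : Dfun x ≤ 8 * |x| := by
  suffices aux : ∀ y : ℝ, 0 < y → Dfun y ≤ 8 * y by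
    rcases lt_trichotomy x 0 with h | h | h
    · rw [abs_of_neg h, ← Dfun_neg]
      exact aux (-x) (by linarith)
    · simp [h, Dfun_zero]
    · rw [abs_of_pos h]; exact aux x h
  intro y h0
  classical
  have hex : ∃ k : ℕ, 2 < 2 ^ k * y := by
    obtain ⟨k, hk⟩ := pow_unbounded_of_one_lt (2 / y) (one_lt_two (α := ℝ))
    rw [div_lt_iff₀ h0] at hk
    exact ⟨k, by linarith⟩
  obtain ⟨K, hKspec, hKmin⟩ : ∃ K : ℕ, 2 < 2 ^ K * y ∧ ∀ m < K, ¬(2 < 2 ^ m * y) :=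
    ⟨Nat.find hex, Nat.find_spec hex, fun m hm => Nat.find_min hex hm⟩
  have hsum := Dsummable y
  rw [Dfun, ← Summable.sum_add_tsum_nat_add K hsum]
  have hP : (0 : ℝ) < 2 ^ K := by positivity
  have h1 : ∑ k ∈ Finset.range K, (2⁻¹ : ℝ) ^ k * (2 - 2 * Real.cos (2 ^ k * y)) ≤ 4 * y := by
    have hterm : ∀ k : ℕ, (2⁻¹ : ℝ) ^ k * (2 - 2 * Real.cos (2 ^ k * y)) ≤ 2 ^ k * y ^ 2 := by
      intro k
      have h := Real.one_sub_sq_div_two_le_cos (x := 2 ^ k * y)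
      have h2 : (2 : ℝ) - 2 * Real.cos (2 ^ k * y) ≤ (2 ^ k * y) ^ 2 := by nlinarith
      calc (2⁻¹ : ℝ) ^ k * (2 - 2 * Real.cos (2 ^ k * y))
          ≤ (2⁻¹ : ℝ) ^ k * ((2 ^ k * y) ^ 2) :=
            mul_le_mul_of_nonneg_left h2 (by positivity)
        _ = ((2 : ℝ)⁻¹ * 2) ^ k * (2 ^ k * y ^ 2) := by
            rw [mul_pow, mul_pow, ← mul_assoc]; ring
        _ = 2 ^ k * y ^ 2 := by norm_num
    calc ∑ k ∈ Finset.range K, (2⁻¹ : ℝ) ^ k * (2 - 2 * Real.cos (2 ^ k * y))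
        ≤ ∑ k ∈ Finset.range K, (2 : ℝ) ^ k * y ^ 2 :=
          Finset.sum_le_sum fun k _ => hterm k
      _ = ((2 : ℝ) ^ K - 1) / (2 - 1) * y ^ 2 := by
          rw [← Finset.sum_mul, geom_sum_eq (by norm_num : (2 : ℝ) ≠ 1)]
      _ ≤ 4 * y := by
          rcases Nat.eq_zero_or_pos K with hK0 | hKpos
          · rw [hK0]; norm_num; positivity
          · obtain ⟨m, hm⟩ : ∃ m, K = m + 1 :=
              ⟨K - 1, (Nat.succ_pred_eq_of_pos hKpos).symm⟩
            have hmin : ¬(2 < 2 ^ m * y) := hKmin m (by omega)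
            push_neg at hmin
            have h4 : (2 : ℝ) ^ K * y ≤ 4 := by
              rw [hm, pow_succ]; nlinarith
            nlinarith [sq_nonneg y]
  have h2 : ∑' k : ℕ, (2⁻¹ : ℝ) ^ (k + K) * (2 - 2 * Real.cos (2 ^ (k + K) * y)) ≤ 4 * y := by
    have hsb : Summable (fun k : ℕ => (2⁻¹ : ℝ) ^ k * ((2⁻¹ : ℝ) ^ K * 4)) :=
      (summable_geometric_of_lt_one (by norm_num) (by norm_num)).mul_right _
    calc ∑' k : ℕ, (2⁻¹ : ℝ) ^ (k + K) * (2 - 2 * Real.cos (2 ^ (k + K) * y))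
        ≤ ∑' k : ℕ, (2⁻¹ : ℝ) ^ k * ((2⁻¹ : ℝ) ^ K * 4) := by
          refine Summable.tsum_le_tsum (fun k => ?_) ((summable_nat_add_iff K).2 hsum) hsb
          calc (2⁻¹ : ℝ) ^ (k + K) * (2 - 2 * Real.cos (2 ^ (k + K) * y))
              ≤ (2⁻¹ : ℝ) ^ (k + K) * 4 := Dterm_le y (k + K)
            _ = (2⁻¹ : ℝ) ^ k * ((2⁻¹ : ℝ) ^ K * 4) := by rw [pow_add]; ring
      _ = (1 - 2⁻¹)⁻¹ * ((2⁻¹ : ℝ) ^ K * 4) := by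
          rw [tsum_mul_right, tsum_geometric_of_lt_one (by norm_num) (by norm_num)]
      _ ≤ 4 * y := by
          have hKi : (2⁻¹ : ℝ) ^ K = ((2 : ℝ) ^ K)⁻¹ := by rw [inv_pow]
          have h8 : ((2 : ℝ) ^ K)⁻¹ < y / 2 := by
            rw [inv_lt_iff_one_lt_mul₀ hP]
            nlinarith
          rw [hKi]
          norm_num
          nlinarith
  linarith

/-- Lower bound: `|x|/2 ≤ Dfun x` for `|x| ≤ 2`. -/
lemma Dfun_ge (x : ℝ) (hx : |x| ≤ 2) : |x| / 2 ≤ Dfun x := by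
  suffices aux : ∀ y : ℝ, 0 < y → y ≤ 2 → y / 2 ≤ Dfun y by
    rcases lt_trichotomy x 0 with h | h | h
    · rw [abs_of_neg h] at *
      rw [← Dfun_neg]
      exact aux (-x) (by linarith) hx
    · simp [h, Dfun_zero]
    · rw [abs_of_pos h] at *
      exact aux x h hx
  intro y h0 h2
  classical
  have hex : ∃ k : ℕ, Real.pi / 2 ≤ 2 ^ k * y := by
    obtain ⟨k, hk⟩ := pow_unbounded_of_one_lt (Real.pi / (2 * y)) (one_lt_two (α := ℝ))
    rw [div_lt_iff₀ (by positivity)] at hk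
    exact ⟨k, by nlinarith⟩
  obtain ⟨K, hKspec, hKmin⟩ :
      ∃ K : ℕ, Real.pi / 2 ≤ 2 ^ K * y ∧ ∀ m < K, ¬(Real.pi / 2 ≤ 2 ^ m * y) :=
    ⟨Nat.find hex, Nat.find_spec hex, fun m hm => Nat.find_min hex hm⟩
  have hP : (0 : ℝ) < 2 ^ K := by positivity
  have hKle : (2 : ℝ) ^ K * y ≤ Real.pi := by
    rcases Nat.eq_zero_or_pos K with hK0 | hKpos
    · rw [hK0]
      have : (3 : ℝ) < Real.pi := Real.pi_gt_three
      simpa using by linarith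
    · obtain ⟨m, hm⟩ : ∃ m, K = m + 1 :=
        ⟨K - 1, (Nat.succ_pred_eq_of_pos hKpos).symm⟩
      have hmin : ¬(Real.pi / 2 ≤ 2 ^ m * y) := hKmin m (by omega)
      push_neg at hmin
      rw [hm, pow_succ]
      nlinarith
  have hcos : Real.cos (2 ^ K * y) ≤ 0 :=
    Real.cos_nonpos_of_pi_div_two_le_of_le hKspec (by linarith [Real.pi_pos])
  have hw : y / 2 ≤ (2⁻¹ : ℝ) ^ K * 2 := by
    have hKi : (2⁻¹ : ℝ) ^ K = ((2 : ℝ) ^ K)⁻¹ := by rw [inv_pow]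
    have hinv : ((2 : ℝ) ^ K)⁻¹ * 2 ^ K = 1 := inv_mul_cancel₀ (ne_of_gt hP)
    have hpi4 : Real.pi < 4 := by linarith [Real.pi_lt_d2]
    have hy4 : (2 : ℝ) ^ K * y < 4 := lt_of_le_of_lt hKle hpi4
    rw [hKi]
    nlinarith [inv_pos.2 hP]
  have hterm : y / 2 ≤ (2⁻¹ : ℝ) ^ K * (2 - 2 * Real.cos (2 ^ K * y)) :=
    le_trans hw (mul_le_mul_of_nonneg_left (by nlinarith) (by positivity))
  exact le_trans hterm (Summable.le_tsum (Dsummable y) K fun j _ => Dterm_nonneg y j)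

lemma sphi_zero (p : ℕ × Bool) : sphi 0 p = 0 := by
  rcases p with ⟨k, b⟩
  cases b <;> simp [sphi]

/-- The two components at scale `k` give the quantity `2⁻¹^k (2 - 2 cos (2^k (t - s)))`. -/
lemma sphi_slice (t s : ℝ) (k : ℕ) :
    (sphi t (k, false) - sphi s (k, false)) ^ 2 + (sphi t (k, true) - sphi s (k, true)) ^ 2
      = (2⁻¹ : ℝ) ^ k * (2 - 2 * Real.cos (2 ^ k * (t - s))) := by
  have hw : ((Real.sqrt 2⁻¹) ^ k) ^ 2 = (2⁻¹ : ℝ) ^ k := by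
    rw [← pow_mul, mul_comm, pow_mul, Real.sq_sqrt (by norm_num : (0 : ℝ) ≤ 2⁻¹)]
  have key : (Real.sin (2 ^ k * t) - Real.sin (2 ^ k * s)) ^ 2
        + (Real.cos (2 ^ k * t) - Real.cos (2 ^ k * s)) ^ 2
      = 2 - 2 * Real.cos (2 ^ k * t - 2 ^ k * s) := by
    rw [Real.cos_sub]
    linear_combination Real.sin_sq_add_cos_sq (2 ^ k * t) + Real.sin_sq_add_cos_sq (2 ^ k * s)
  have harg : (2 : ℝ) ^ k * t - 2 ^ k * s = 2 ^ k * (t - s) := by ring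
  simp only [sphi, if_true, if_false]
  calc ((Real.sqrt 2⁻¹) ^ k * Real.sin (2 ^ k * t)
          - (Real.sqrt 2⁻¹) ^ k * Real.sin (2 ^ k * s)) ^ 2
        + ((Real.sqrt 2⁻¹) ^ k * (Real.cos (2 ^ k * t) - 1)
          - (Real.sqrt 2⁻¹) ^ k * (Real.cos (2 ^ k * s) - 1)) ^ 2
      = ((Real.sqrt 2⁻¹) ^ k) ^ 2 * ((Real.sin (2 ^ k * t) - Real.sin (2 ^ k * s)) ^ 2
          + (Real.cos (2 ^ k * t) - Real.cos (2 ^ k * s)) ^ 2) := by ring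
    _ = (2⁻¹ : ℝ) ^ k * (2 - 2 * Real.cos (2 ^ k * (t - s))) := by
        rw [hw, key, harg]

lemma pair_summable (t s : ℝ) :
    Summable (fun p : ℕ × Bool => (sphi t p - sphi s p) ^ 2) := by
  rw [summable_prod_of_nonneg (fun p => sq_nonneg _)]
  refine ⟨fun k => Summable.of_finite, ?_⟩
  have hval : ∀ k : ℕ, ∑' b : Bool, (sphi t (k, b) - sphi s (k, b)) ^ 2
      = (2⁻¹ : ℝ) ^ k * (2 - 2 * Real.cos (2 ^ k * (t - s))) := by
    intro k
    rw [tsum_fintype]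
    rw [Fintype.sum_bool]
    rw [add_comm]
    exact sphi_slice t s k
  exact (Dsummable (t - s)).congr fun k => (hval k).symm

lemma pair_tsum (t s : ℝ) :
    ∑' p : ℕ × Bool, (sphi t p - sphi s p) ^ 2 = Dfun (t - s) := by
  rw [Summable.tsum_prod' (pair_summable t s) fun k => Summable.of_finite]
  unfold Dfun
  refine tsum_congr fun k => ?_
  rw [tsum_fintype, Fintype.sum_bool, add_comm]
  exact sphi_slice t s k

lemma master_summable (x y : ℕ → ℝ) (hs : Summable fun i => |x i - y i|) :
    Summable (fun q : ℕ × (ℕ × Bool) => (sphi (x q.1) q.2 - sphi (y q.1) q.2) ^ 2) := by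
  rw [summable_prod_of_nonneg
    (f := fun q : ℕ × (ℕ × Bool) => (sphi (x q.1) q.2 - sphi (y q.1) q.2) ^ 2)
    (fun q => sq_nonneg _)]
  constructor
  · intro i
    simp only
    exact pair_summable (x i) (y i)
  · simp only
    refine Summable.of_nonneg_of_le (fun i => tsum_nonneg fun p => sq_nonneg _)
      (fun i => ?_) (hs.mul_left 8)
    rw [pair_tsum]
    exact Dfun_le _

lemma outer_summable (x y : ℕ → ℝ) (hs : Summable fun i => |x i - y i|) :
    Summable fun i => Dfun (x i - y i) :=
  Summable.of_nonneg_of_le (fun i => Dfun_nonneg _) (fun i => Dfun_le _) (hs.mul_left 8)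

lemma master_tsum (x y : ℕ → ℝ) (hs : Summable fun i => |x i - y i|) :
    ∑' q : ℕ × (ℕ × Bool), (sphi (x q.1) q.2 - sphi (y q.1) q.2) ^ 2
      = ∑' i, Dfun (x i - y i) := by
  rw [Summable.tsum_prod' (master_summable x y hs) fun i => pair_summable (x i) (y i)]
  exact tsum_congr fun i => pair_tsum (x i) (y i)

lemma norm_rpow_two_eq_sq (r : ℝ) : ‖r‖ ^ (2 : ℝ≥0∞).toReal = r ^ 2 := by
  have h2 : ((2 : ℝ≥0∞)).toReal = ((2 : ℕ) : ℝ) := by simp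
  rw [h2, Real.rpow_natCast, Real.norm_eq_abs, sq_abs]

/-- There is a `(1/2)`-snowflake map from the closed unit ball of `ℓ¹` into the Hilbert
space `ℓ²`: a map `g` with `(1/c)·‖z−z'‖₁ ≤ ‖g z − g z'‖₂² ≤ c·‖z−z'‖₁`. -/
theorem half_snowflake_into_hilbert :
    ∃ c : ℝ, 1 ≤ c ∧
      ∃ g : lp (fun _ : ℕ => ℝ) 1 → lp (fun _ : ℕ => ℝ) 2,
        ∀ z z' : lp (fun _ : ℕ => ℝ) 1, ‖z‖ ≤ 1 → ‖z'‖ ≤ 1 →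
          (1 / c) * ‖z - z'‖ ≤ ‖g z - g z'‖ ^ 2 ∧ ‖g z - g z'‖ ^ 2 ≤ c * ‖z - z'‖ := by
  classical
  obtain ⟨e⟩ : Nonempty (ℕ ≃ ℕ × (ℕ × Bool)) := by
    haveI : Denumerable (ℕ × (ℕ × Bool)) := Denumerable.ofEncodableOfInfinite _
    exact ⟨(Denumerable.eqv (ℕ × (ℕ × Bool))).symm⟩
  -- summability of coordinates of an ℓ¹ element
  have hsum1 : ∀ z : lp (fun _ : ℕ => ℝ) 1, Summable fun i => |(z : ∀ _ : ℕ, ℝ) i| := by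
    intro z
    have := (lp.memℓp z).summable (by norm_num : 0 < (1 : ℝ≥0∞).toReal)
    simpa [Real.norm_eq_abs] using this
  -- membership of the embedding in ℓ²
  have hmem : ∀ z : lp (fun _ : ℕ => ℝ) 1,
      Memℓp (fun n => sphi ((z : ∀ _ : ℕ, ℝ) (e n).1) (e n).2) (2 : ℝ≥0∞) := by
    intro z
    apply memℓp_gen
    have hz : Summable fun i => |(z : ∀ _ : ℕ, ℝ) i - (0 : ℝ)| := by
      simpa using hsum1 z
    have hbig := master_summable (fun i => (z : ∀ _ : ℕ, ℝ) i) (fun _ => 0) hz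
    have hN : Summable fun n : ℕ =>
        (sphi ((z : ∀ _ : ℕ, ℝ) (e n).1) (e n).2 - sphi 0 (e n).2) ^ 2 :=
      (Equiv.summable_iff e).2 hbig
    refine hN.congr fun n => ?_
    rw [sphi_zero, sub_zero, norm_rpow_two_eq_sq]
  refine ⟨8, by norm_num, fun z => ⟨_, hmem z⟩, ?_⟩
  intro z z' hz1 hz'1
  set g : lp (fun _ : ℕ => ℝ) 1 → lp (fun _ : ℕ => ℝ) 2 := fun z => ⟨_, hmem z⟩ with hg
  set d : ℕ → ℝ := fun i => (z : ∀ _ : ℕ, ℝ) i - (z' : ∀ _ : ℕ, ℝ) i with hd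
  have hdsum : Summable fun i => |d i| := by
    have := hsum1 (z - z')
    refine this.congr fun i => ?_
    rw [hd, lp.coeFn_sub, Pi.sub_apply]
  -- the ℓ¹ norm is the sum of absolute values
  have hnorm1 : ‖z - z'‖ = ∑' i, |d i| := by
    rw [lp.norm_eq_tsum_rpow (by norm_num : 0 < (1 : ℝ≥0∞).toReal) (z - z')]
    simp only [ENNReal.toReal_one, Real.rpow_one, one_div_one]
    refine tsum_congr fun i => ?_
    rw [lp.coeFn_sub, Pi.sub_apply, Real.norm_eq_abs, hd]
  -- squared ℓ² norm of the difference
  have hnormsq : ‖g z - g z'‖ ^ 2 = ∑' i, Dfun (d i) := by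
    have h := lp.norm_rpow_eq_tsum (p := 2) (by norm_num) (g z - g z')
    have hL : ‖g z - g z'‖ ^ ((2 : ℝ≥0∞)).toReal = ‖g z - g z'‖ ^ (2 : ℕ) := by
      rw [show ((2 : ℝ≥0∞)).toReal = ((2 : ℕ) : ℝ) by simp, Real.rpow_natCast]
    rw [hL] at h
    rw [h]
    have hcoe : ∀ n : ℕ, (g z - g z') n
        = sphi ((z : ∀ _ : ℕ, ℝ) (e n).1) (e n).2
          - sphi ((z' : ∀ _ : ℕ, ℝ) (e n).1) (e n).2 := by
      intro n
      rfl
    calc ∑' n, ‖(g z - g z') n‖ ^ ((2 : ℝ≥0∞)).toReal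
        = ∑' n, (sphi ((z : ∀ _ : ℕ, ℝ) (e n).1) (e n).2
            - sphi ((z' : ∀ _ : ℕ, ℝ) (e n).1) (e n).2) ^ 2 := by
          refine tsum_congr fun n => ?_
          simp only [norm_rpow_two_eq_sq, hcoe]
      _ = ∑' q : ℕ × (ℕ × Bool), (sphi ((z : ∀ _ : ℕ, ℝ) q.1) q.2
            - sphi ((z' : ∀ _ : ℕ, ℝ) q.1) q.2) ^ 2 :=
          Equiv.tsum_eq e (fun q : ℕ × (ℕ × Bool) =>
            (sphi ((z : ∀ _ : ℕ, ℝ) q.1) q.2 - sphi ((z' : ∀ _ : ℕ, ℝ) q.1) q.2) ^ 2)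
      _ = ∑' i, Dfun (d i) :=
          master_tsum _ _ hdsum
  have houter : Summable fun i => Dfun (d i) := outer_summable _ _ hdsum
  have hdle : ∀ i, |d i| ≤ 2 := by
    intro i
    have h1 : |(z : ∀ _ : ℕ, ℝ) i| ≤ ‖z‖ := by
      simpa [Real.norm_eq_abs] using
        lp.norm_apply_le_norm (by norm_num : (1 : ℝ≥0∞) ≠ 0) z i
    have h2 : |(z' : ∀ _ : ℕ, ℝ) i| ≤ ‖z'‖ := by
      simpa [Real.norm_eq_abs] using
        lp.norm_apply_le_norm (by norm_num : (1 : ℝ≥0∞) ≠ 0) z' i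
    rw [hd]
    calc |(z : ∀ _ : ℕ, ℝ) i - (z' : ∀ _ : ℕ, ℝ) i|
        ≤ |(z : ∀ _ : ℕ, ℝ) i| + |(z' : ∀ _ : ℕ, ℝ) i| := abs_sub _ _
      _ ≤ 2 := by linarith
  constructor
  · -- lower bound
    rw [hnormsq, hnorm1]
    have hle : ∀ i, 1 / 8 * |d i| ≤ Dfun (d i) := by
      intro i
      have h1 := Dfun_ge (d i) (hdle i)
      have h2 := abs_nonneg (d i)
      linarith
    calc 1 / 8 * ∑' i, |d i| = ∑' i, 1 / 8 * |d i| := by rw [tsum_mul_left]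
      _ ≤ ∑' i, Dfun (d i) := Summable.tsum_le_tsum hle (hdsum.mul_left _) houter
  · -- upper bound
    rw [hnormsq, hnorm1]
    calc ∑' i, Dfun (d i) ≤ ∑' i, 8 * |d i| :=
          Summable.tsum_le_tsum (fun i => Dfun_le (d i)) houter (hdsum.mul_left _)
      _ = 8 * ∑' i, |d i| := tsum_mul_left
end

section
/- Let H be a real inner product space, c ≥ 1, and let h : ℝ → H satisfy h(0) = 0 and (1/c)·|t−s| ≤ ‖h(t)−h(s)‖² ≤ c·|t−s| for all t, s ∈ ℝ. Let Z be the closed unit ball of ℓ¹ (real sequences z with Σ|zᵢ| ≤ 1). Then for every z ∈ Z the sequence (h(z₁), h(z₂), …) lies in ℓ²(ℕ, H), and the resulting map g : Z → ℓ²(ℕ, H), g(z) = (h(zᵢ))ᵢ, satisfies (1/c)·‖z−z'‖₁ ≤ ‖g(z)−g(z')‖² ≤ c·‖z−z'‖₁ for all z, z' ∈ Z. -/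
open scoped ENNReal

/-- Applying a `(1/2)`-snowflake map `h : ℝ → H` with `h 0 = 0` coordinatewise to points of
the unit ball of `ℓ¹` yields sequences in `ℓ²(ℕ, H)`, and the resulting map `g` is again a
`(1/2)`-snowflake map (with the same constant). -/
theorem coordinatewise_snowflake {H : Type*} [NormedAddCommGroup H]
    [InnerProductSpace ℝ H] (c : ℝ) (hc : 1 ≤ c) (h : ℝ → H) (h0 : h 0 = 0)
    (hsnow : ∀ t s : ℝ,
      (1 / c) * |t - s| ≤ ‖h t - h s‖ ^ 2 ∧ ‖h t - h s‖ ^ 2 ≤ c * |t - s|) :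
    (∀ z : lp (fun _ : ℕ => ℝ) 1, ‖z‖ ≤ 1 → Memℓp (fun i : ℕ => h (z i)) 2) ∧
    ∃ g : lp (fun _ : ℕ => ℝ) 1 → lp (fun _ : ℕ => H) 2,
      (∀ z : lp (fun _ : ℕ => ℝ) 1, ‖z‖ ≤ 1 → ∀ i : ℕ, g z i = h (z i)) ∧
      ∀ z z' : lp (fun _ : ℕ => ℝ) 1, ‖z‖ ≤ 1 → ‖z'‖ ≤ 1 →
        (1 / c) * ‖z - z'‖ ≤ ‖g z - g z'‖ ^ 2 ∧ ‖g z - g z'‖ ^ 2 ≤ c * ‖z - z'‖ := by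
  have hc0 : 0 < c := lt_of_lt_of_le one_pos hc
  have h1 : (1 : ℝ≥0∞).toReal = 1 := by simp
  have h2 : (2 : ℝ≥0∞).toReal = 2 := by simp
  have hpow2 : ∀ x : ℝ, x ^ (2 : ℝ) = x ^ 2 := fun x => by
    rw [show (2 : ℝ) = ((2 : ℕ) : ℝ) by norm_num, Real.rpow_natCast]
  -- summability of coordinates of any z in ℓ¹
  have hsumz : ∀ z : lp (fun _ : ℕ => ℝ) 1, Summable fun i => |z i| := by
    intro z
    have := (lp.memℓp z).summable (p := 1) (by norm_num)
    simpa [h1, Real.norm_eq_abs] using this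
  -- ℓ¹ norm as a tsum
  have hnorm1 : ∀ z : lp (fun _ : ℕ => ℝ) 1, ‖z‖ = ∑' i, |z i| := by
    intro z
    have := lp.norm_rpow_eq_tsum (p := 1) (by norm_num) z
    simpa [h1, Real.norm_eq_abs] using this
  have hmem : ∀ z : lp (fun _ : ℕ => ℝ) 1, Memℓp (fun i : ℕ => h (z i)) 2 := by
    intro z
    apply memℓp_gen (p := 2)
    rw [h2]
    have hb : ∀ i, ‖h (z i)‖ ^ (2 : ℝ) ≤ c * |z i| := by
      intro i
      rw [hpow2]
      simpa [h0] using (hsnow (z i) 0).2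
    refine Summable.of_nonneg_of_le (fun i => Real.rpow_nonneg (norm_nonneg _) _) hb ?_
    exact (hsumz z).mul_left c
  refine ⟨fun z _ => hmem z, ?_⟩
  refine ⟨fun z => ⟨fun i => h (z i), hmem z⟩, fun z _ i => rfl, ?_⟩
  intro z z' _ _
  set f : lp (fun _ : ℕ => H) 2 :=
    (⟨fun i => h (z i), hmem z⟩ - ⟨fun i => h (z' i), hmem z'⟩ : lp (fun _ : ℕ => H) 2) with hf
  have hd : ∀ i : ℕ, f i = h (z i) - h (z' i) := fun i => rfl
  -- ℓ² norm squared as a tsum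
  have hnormsq : ‖f‖ ^ 2 = ∑' i, ‖h (z i) - h (z' i)‖ ^ 2 := by
    have := lp.norm_rpow_eq_tsum (p := 2) (by norm_num) f
    rw [h2] at this
    rw [← hpow2, this]
    exact tsum_congr fun i => by rw [hd i, hpow2]
  -- coordinates of z - z'
  have hdz : ∀ i : ℕ, (z - z') i = z i - z' i := fun i => rfl
  have hS1 : Summable fun i => |z i - z' i| := by
    have := hsumz (z - z')
    exact this.congr fun i => by rw [hdz i]
  have hS2 : Summable fun i => ‖h (z i) - h (z' i)‖ ^ 2 := by
    have := (lp.memℓp f).summable (p := 2) (by norm_num)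
    rw [h2] at this
    exact this.congr fun i => by rw [hd i, hpow2]
  have hz1 : ‖z - z'‖ = ∑' i, |z i - z' i| := by
    rw [hnorm1 (z - z')]
    exact tsum_congr fun i => by rw [hdz i]
  constructor
  · rw [hz1, hnormsq, ← tsum_mul_left]
    refine Summable.tsum_le_tsum (fun i => (hsnow (z i) (z' i)).1) (hS1.mul_left _) hS2
  · rw [hz1, hnormsq, ← tsum_mul_left]
    refine Summable.tsum_le_tsum (fun i => (hsnow (z i) (z' i)).2) hS2 (hS1.mul_left _)
end

section
/- Consider the metric d on ℕ defined by d(m,n) = log(1 + |m−n|). Then (ℕ,d) is not bi-Lipschitz equivalent to an ultrametric: there exist no ultrametric u on ℕ and constant c ≥ 1 such that (1/c)·u(m,n) ≤ d(m,n) ≤ c·u(m,n) for all m, n ∈ ℕ. -/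
/-- Kovalev's example: the metric `d(m,n) = log(1+|m−n|)` on `ℕ` is not bi-Lipschitz
equivalent to any ultrametric. -/
theorem kovalev_not_biLipschitz_to_ultrametric :
    ¬ ∃ (u : ℕ → ℕ → ℝ) (c : ℝ), 1 ≤ c ∧
      (∀ m n, 0 ≤ u m n) ∧
      (∀ m n, u m n = u n m) ∧
      (∀ m n, u m n = 0 ↔ m = n) ∧
      (∀ m n k, u m k ≤ max (u m n) (u n k)) ∧
      (∀ m n : ℕ, (1 / c) * u m n ≤ Real.log (1 + |(m : ℝ) - (n : ℝ)|) ∧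
        Real.log (1 + |(m : ℝ) - (n : ℝ)|) ≤ c * u m n) := by
  rintro ⟨u, c, hc, hnonneg, _hsymm, hzero, hultra, hbi⟩
  have hc0 : (0:ℝ) < c := lt_of_lt_of_le one_pos hc
  -- each consecutive step has u k (k+1) ≤ c * log 2
  have hstep : ∀ k : ℕ, u k (k+1) ≤ c * Real.log 2 := by
    intro k
    have h := (hbi k (k+1)).1
    have habs : |(k : ℝ) - ((k+1 : ℕ) : ℝ)| = 1 := by
      push_cast; rw [abs_sub_comm]; norm_num
    rw [habs] at h
    have h2 : (1:ℝ) + 1 = 2 := by norm_num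
    rw [h2] at h
    have h3 : c * (1/c * u k (k+1)) = u k (k+1) := by field_simp
    have h4 := mul_le_mul_of_nonneg_left h hc0.le
    linarith
  -- chaining: u 0 k ≤ c * log 2 for all k
  have hchain : ∀ k : ℕ, u 0 k ≤ c * Real.log 2 := by
    intro k
    induction k with
    | zero =>
      have : u 0 0 = 0 := (hzero 0 0).mpr rfl
      rw [this]
      positivity
    | succ n ih =>
      have := hultra 0 n (n+1)
      exact this.trans (max_le ih (hstep n))
  -- hence log (1+k) ≤ c^2 * log 2 for all k
  have hbound : ∀ k : ℕ, Real.log (1 + (k:ℝ)) ≤ c^2 * Real.log 2 := by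
    intro k
    have h := (hbi 0 k).2
    have habs : |((0:ℕ) : ℝ) - (k : ℝ)| = (k : ℝ) := by
      push_cast; rw [abs_sub_comm]; simp
    rw [habs] at h
    calc Real.log (1 + (k:ℝ)) ≤ c * u 0 k := h
      _ ≤ c * (c * Real.log 2) := by
          exact mul_le_mul_of_nonneg_left (hchain k) hc0.le
      _ = c^2 * Real.log 2 := by ring
  -- contradiction for large k
  set x := c^2 * Real.log 2 with hx
  set k := ⌈Real.exp x⌉₊ with hk
  have hkx : Real.exp x ≤ (k : ℝ) := Nat.le_ceil _
  have h1 : Real.exp x < 1 + (k:ℝ) := by linarith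
  have : x < Real.log (1 + (k:ℝ)) := by
    have := Real.log_lt_log (Real.exp_pos x) h1
    rwa [Real.log_exp] at this
  exact absurd (hbound k) (not_le.mpr this)
end

section
/- Consider the metric d on ℕ defined by d(m,n) = log(1 + |m−n|). Then for every s > 0 the quasi-metric d^s is LM: there is a constant c ≥ 1 such that (1/c)·(log(1+|m−n|))^s ≤ ca(d^s)(m,n) ≤ (log(1+|m−n|))^s for all m, n ∈ ℕ, where ca(d^s)(m,n) = inf Σᵢ d(mᵢ,mᵢ₊₁)^s, the infimum over all finite chains m = m₀, m₁, …, m_{k+1} = n in ℕ. Consequently the critical exponent of (ℕ,d) is s₀ = ∞. -/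
/-- Kovalev's metric on `ℕ`: `d(m,n) = log(1+|m−n|)`. -/
noncomputable def kovalevDist (m n : ℕ) : ℝ :=
  Real.log (1 + |(m : ℝ) - (n : ℝ)|)

/-!
Let `L = d(m, n)` and consider a chain from `m` to `n`. If one of its steps has `d ≥ L / 2`, that
step alone costs `(L / 2) ^ s`. Otherwise every step moves by at most `exp (L / 2) - 1`, while the
chain covers `|m - n| = exp L - 1 = (exp (L / 2) - 1) (exp (L / 2) + 1)`; so at least `exp (L / 2)`
steps are nontrivial, each costing at least `(log 2) ^ s`. Since `exp (L / 2)` dominates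
`(L / (2 s)) ^ s`, every chain sum is at least `(L / max 2 (2 s / log 2)) ^ s`.
-/

open Finset Real

section ChainApproach

variable {Z : Type*} {ρ : Z → Z → ℝ} {z z' : Z}

theorem le_chainApproach {C : ℝ}
    (h : ∀ (n : ℕ) (f : ℕ → Z), f 0 = z → f (n + 1) = z' →
      C ≤ ∑ i ∈ range (n + 1), ρ (f i) (f (i + 1))) :
    C ≤ chainApproach ρ z z' :=
  le_csInf ⟨_, 0, fun i => if i = 0 then z else z', by simp, by simp, rfl⟩
    (by rintro _ ⟨n, f, h0, h1, rfl⟩; exact h n f h0 h1)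

theorem chainApproach_le (hρ : ∀ a b, 0 ≤ ρ a b) (z z' : Z) :
    chainApproach ρ z z' ≤ ρ z z' :=
  csInf_le ⟨0, by rintro _ ⟨n, f, -, -, rfl⟩; exact sum_nonneg fun i _ => hρ _ _⟩
    ⟨0, fun i => if i = 0 then z else z', by simp, by simp, by simp⟩

end ChainApproach

theorem dist_le_card_filter_ne_mul {α : Type*} [PseudoMetricSpace α] [DecidableEq α]
    (f : ℕ → α) (k : ℕ) {B : ℝ} (hB : ∀ i ∈ range k, dist (f i) (f (i + 1)) ≤ B) :
    dist (f 0) (f k) ≤ #{i ∈ range k | f i ≠ f (i + 1)} * B := by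
  have hB' : ∀ i ∈ {i ∈ range k | f i ≠ f (i + 1)}, dist (f i) (f (i + 1)) ≤ B :=
    fun i hi => hB i (mem_filter.mp hi).1
  calc dist (f 0) (f k) ≤ ∑ i ∈ range k, dist (f i) (f (i + 1)) := dist_le_range_sum_dist f k
    _ = ∑ i ∈ {i ∈ range k | f i ≠ f (i + 1)}, dist (f i) (f (i + 1)) :=
      (sum_filter_of_ne (p := fun i => f i ≠ f (i + 1))
        fun i _ h heq => h (by rw [heq, dist_self])).symm
    _ ≤ _ := by simpa using sum_le_card_nsmul _ _ _ hB'

theorem Real.rpow_le_exp_mul {x s : ℝ} (hx : 0 ≤ x) (hs : 0 ≤ s) : x ^ s ≤ exp (s * x) :=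
  calc x ^ s ≤ exp x ^ s := rpow_le_rpow hx (by linarith [add_one_le_exp x]) hs
    _ = exp (s * x) := by rw [← exp_mul, mul_comm]

namespace kovalevDist

theorem eq_log_dist (m n : ℕ) : kovalevDist m n = log (1 + dist m n) := rfl

theorem self_eq_zero (n : ℕ) : kovalevDist n n = 0 := by simp [eq_log_dist]

theorem nonneg (m n : ℕ) : 0 ≤ kovalevDist m n :=
  eq_log_dist m n ▸ log_nonneg (le_add_of_nonneg_right dist_nonneg)

theorem exp_eq (m n : ℕ) : exp (kovalevDist m n) = 1 + dist m n :=
  exp_log (by positivity)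

theorem log_two_le {m n : ℕ} (h : m ≠ n) : log 2 ≤ kovalevDist m n := by
  have : (1 : ℝ) ≤ dist m n := Nat.pairwise_one_le_dist h
  exact eq_log_dist m n ▸ log_le_log (by norm_num) (by linarith)

theorem exp_half_mul_rpow_log_two_le_sum_of_short_steps {s : ℝ} (hs : 0 ≤ s)
    (f : ℕ → ℕ) (k : ℕ) (hne : f 0 ≠ f k)
    (hshort : ∀ i ∈ range k, kovalevDist (f i) (f (i + 1)) ≤ kovalevDist (f 0) (f k) / 2) :
    exp (kovalevDist (f 0) (f k) / 2) * log 2 ^ s ≤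
      ∑ i ∈ range k, kovalevDist (f i) (f (i + 1)) ^ s := by
  set L := kovalevDist (f 0) (f k)
  set F := {i ∈ range k | f i ≠ f (i + 1)}
  have hL : 0 < exp (L / 2) - 1 :=
    sub_pos.mpr (one_lt_exp_iff.mpr (half_pos ((log_pos one_lt_two).trans_le (log_two_le hne))))
  have hcard : exp (L / 2) ≤ #F := by
    have hdist := dist_le_card_filter_ne_mul f k (B := exp (L / 2) - 1) fun i hi => by
      linarith [exp_eq (f i) (f (i + 1)), exp_le_exp.mpr (hshort i hi)]
    have hsq : exp L = exp (L / 2) * exp (L / 2) := by rw [← exp_add, add_halves]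
    nlinarith [exp_eq (f 0) (f k)]
  calc exp (L / 2) * log 2 ^ s ≤ #F * log 2 ^ s := by gcongr
    _ = ∑ i ∈ F, log 2 ^ s := by simp
    _ ≤ ∑ i ∈ F, kovalevDist (f i) (f (i + 1)) ^ s :=
      sum_le_sum fun i hi =>
        rpow_le_rpow (log_nonneg one_le_two) (log_two_le (mem_filter.mp hi).2) hs
    _ ≤ _ := sum_le_sum_of_subset_of_nonneg (filter_subset _ _) fun i _ _ =>
        rpow_nonneg (nonneg _ _) s

theorem rpow_div_le_chain_sum {s : ℝ} (hs : 0 < s) (f : ℕ → ℕ) (k : ℕ) :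
    (kovalevDist (f 0) (f (k + 1)) / max 2 (2 * s / log 2)) ^ s ≤
      ∑ i ∈ range (k + 1), kovalevDist (f i) (f (i + 1)) ^ s := by
  set L := kovalevDist (f 0) (f (k + 1))
  have hL : 0 ≤ L := nonneg _ _
  by_cases hlong : ∃ i ∈ range (k + 1), L / 2 ≤ kovalevDist (f i) (f (i + 1))
  · obtain ⟨i, hi, hiL⟩ := hlong
    calc (L / max 2 (2 * s / log 2)) ^ s ≤ (L / 2) ^ s :=
          rpow_le_rpow (by positivity)
            (div_le_div_of_nonneg_left hL two_pos (le_max_left _ _)) hs.le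
      _ ≤ kovalevDist (f i) (f (i + 1)) ^ s := rpow_le_rpow (by positivity) hiL hs.le
      _ ≤ _ := single_le_sum (f := fun j => kovalevDist (f j) (f (j + 1)) ^ s)
          (fun j _ => rpow_nonneg (nonneg _ _) s) hi
  · push Not at hlong
    have hne : f 0 ≠ f (k + 1) := fun h => by
      have hL0 : L = 0 := by simp only [L, h, self_eq_zero]
      linarith [hlong 0 (by simp), nonneg (f 0) (f 1)]
    have hlog2 : 0 < log 2 := log_pos one_lt_two
    calc (L / max 2 (2 * s / log 2)) ^ s ≤ (log 2 * (L / (2 * s))) ^ s := by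
          refine rpow_le_rpow (by positivity) ?_ hs.le
          calc L / max 2 (2 * s / log 2) ≤ L / (2 * s / log 2) :=
                div_le_div_of_nonneg_left hL (by positivity) (le_max_right _ _)
            _ = log 2 * (L / (2 * s)) := by field_simp
      _ = log 2 ^ s * (L / (2 * s)) ^ s := mul_rpow hlog2.le (by positivity)
      _ ≤ log 2 ^ s * exp (s * (L / (2 * s))) := by
          gcongr
          exact rpow_le_exp_mul (by positivity) hs.le
      _ = exp (L / 2) * log 2 ^ s := by
          rw [mul_comm]
          field_simp
      _ ≤ _ := exp_half_mul_rpow_log_two_le_sum_of_short_steps hs.le f (k + 1) hne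
          fun i hi => (hlong i hi).le

end kovalevDist

/-- For every `s > 0` the quasi-metric `d^s` (where `d(m,n) = log(1+|m−n|)` on `ℕ`)
is LM: its chain approach is bi-Lipschitz to it. Consequently the critical exponent of
`(ℕ,d)` is `s₀ = ∞`. -/
theorem kovalev_isLM_rpow (s : ℝ) (hs : 0 < s) :
    ∃ c : ℝ, 1 ≤ c ∧ ∀ m n : ℕ,
      (1 / c) * kovalevDist m n ^ s ≤
          chainApproach (fun a b => kovalevDist a b ^ s) m n ∧
        chainApproach (fun a b => kovalevDist a b ^ s) m n ≤ kovalevDist m n ^ s := by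
  set M := max 2 (2 * s / log 2)
  have hM : 1 ≤ M := one_le_two.trans (le_max_left _ _)
  refine ⟨M ^ s, one_le_rpow hM hs.le, fun m n => ⟨le_chainApproach ?_,
    chainApproach_le (fun a b => rpow_nonneg (kovalevDist.nonneg a b) s) m n⟩⟩
  rintro k f rfl rfl
  calc 1 / M ^ s * kovalevDist (f 0) (f (k + 1)) ^ s
      = (kovalevDist (f 0) (f (k + 1)) / M) ^ s := by
        rw [div_rpow (kovalevDist.nonneg _ _) (by positivity), one_div_mul_eq_div]
    _ ≤ _ := kovalevDist.rpow_div_le_chain_sum hs f k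
end
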